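/- arXiv:1709.03908 — 9 statements merged into one kernel-verified Lean document; each statement's English description precedes it below -/
import Mathlib

section
/- Let q be a prime power and m, n positive integers. If C is a subset of the space of m×n matrices over F_q with at least two elements and minimum rank distance d, then the cardinality of C is at most q^{max(m,n)·(min(m,n)−d+1)}. -/
/-!
Puncturing argument: if two codewords agree on a set `s` of rows, their difference has at
most `#sᶜ` nonzero rows, hence rank at most `#sᶜ`. So as soon as `#sᶜ < d`, restricting to the
rows in `s` is injective on a code of minimum rank distance `d`, and keeping `m - d + 1` rows
bounds the code by the number of `(m - d + 1) × n` matrices. For `n < m` apply this to columns.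
-/

open Finset

namespace Matrix

variable {ι κ F : Type*} [Fintype κ] [Field F]

theorem rank_pos_of_ne_zero {A : Matrix ι κ F} (hA : A ≠ 0) : 0 < A.rank := by
  classical
  rw [Nat.pos_iff_ne_zero, rank, Ne, Submodule.finrank_eq_zero, LinearMap.range_eq_bot]
  exact fun h => hA (toLin'.injective (by rwa [toLin'_apply', map_zero]))

variable [Fintype ι]

theorem rank_sub_le_card_compl [DecidableEq ι] {A B : Matrix ι κ F} (s : Finset ι)
    (h : ∀ i ∈ s, A i = B i) : (A - B).rank ≤ #sᶜ :=
  rank_le_card_of_support_subset _ _ fun i hi => by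
    by_contra hs
    exact hi (sub_eq_zero.mpr (h i (by simpa using hs)))

variable [Fintype F]

theorem card_le_pow_of_forall_le_rank_sub (C : Finset (Matrix ι κ F)) {d : ℕ}
    (hmin : ∀ A ∈ C, ∀ B ∈ C, A ≠ B → d ≤ (A - B).rank) :
    #C ≤ Fintype.card F ^ ((Fintype.card ι - (d - 1)) * Fintype.card κ) := by
  classical
  obtain ⟨s, -, hs⟩ := (univ : Finset ι).exists_subset_card_eq
    (Nat.sub_le (Fintype.card ι) (d - 1))
  have hinj : Set.InjOn (fun A : Matrix ι κ F => fun i : s => A i) C := by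
    intro A hA B hB hAB
    by_contra hne
    have hrows : ∀ i ∈ s, A i = B i := fun i hi => congrFun hAB ⟨i, hi⟩
    have hle := rank_sub_le_card_compl s hrows
    have hpos := rank_pos_of_ne_zero (sub_ne_zero.mpr hne)
    have hd := hmin A hA B hB hne
    rw [card_compl, hs] at hle
    omega
  calc #C ≤ Fintype.card (s → κ → F) :=
        card_le_card_of_injOn _ (fun _ _ => mem_coe.mpr (mem_univ _)) hinj
    _ = _ := by simp only [Fintype.card_fun, Fintype.card_coe, hs, ← pow_mul, mul_comm]

theorem card_le_pow_of_forall_le_rank_sub' (C : Finset (Matrix ι κ F)) {d : ℕ}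
    (hmin : ∀ A ∈ C, ∀ B ∈ C, A ≠ B → d ≤ (A - B).rank) :
    #C ≤ Fintype.card F ^ ((Fintype.card κ - (d - 1)) * Fintype.card ι) := by
  rw [← card_map (transposeAddEquiv ι κ F).toEmbedding]
  apply card_le_pow_of_forall_le_rank_sub
  simp only [mem_map_equiv]
  intro A hA B hB hne
  simpa [← transpose_sub, rank_transpose] using
    hmin _ hA _ hB fun h => hne (by simpa using congrArg transpose h)

end Matrix

open Matrix

theorem singleton_like_bound_general (q m n d : ℕ)
    (F : Type*) [Field F] [Fintype F] (hF : Fintype.card F = q)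
    (C : Finset (Matrix (Fin m) (Fin n) F))
    (hmin : ∀ A ∈ C, ∀ B ∈ C, A ≠ B → d ≤ (A - B).rank)
    (hach : ∃ A ∈ C, ∃ B ∈ C, A ≠ B ∧ (A - B).rank = d) :
    C.card ≤ q ^ (max m n * (min m n - d + 1)) := by
  obtain ⟨A, -, B, -, hAB, rfl⟩ := hach
  have hpos : 0 < (A - B).rank := rank_pos_of_ne_zero (sub_ne_zero.mpr hAB)
  subst hF
  rcases le_total m n with hmn | hnm
  · have hrows := card_le_pow_of_forall_le_rank_sub C hmin
    have hle := rank_le_height (A - B)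
    rw [Fintype.card_fin, Fintype.card_fin] at hrows
    rwa [max_eq_right hmn, min_eq_left hmn, mul_comm,
      show m - (A - B).rank + 1 = m - ((A - B).rank - 1) by omega]
  · have hcols := card_le_pow_of_forall_le_rank_sub' C hmin
    have hle := rank_le_width (A - B)
    rw [Fintype.card_fin, Fintype.card_fin] at hcols
    rwa [max_eq_left hnm, min_eq_right hnm, mul_comm,
      show n - (A - B).rank + 1 = n - ((A - B).rank - 1) by omega]

/-- Singleton-like bound for the rank metric: a code `C` in the space of `m × n`
matrices over a finite field `F` of cardinality `q`, with at least two elements and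
minimum rank distance `d`, satisfies `|C| ≤ q ^ (max m n * (min m n - d + 1))`. -/
theorem singleton_like_bound (q m n d : ℕ) (hm : 0 < m) (hn : 0 < n)
    (F : Type*) [Field F] [Fintype F] (hF : Fintype.card F = q)
    (C : Finset (Matrix (Fin m) (Fin n) F)) (h2 : 2 ≤ C.card)
    (hmin : ∀ A ∈ C, ∀ B ∈ C, A ≠ B → d ≤ (A - B).rank)
    (hach : ∃ A ∈ C, ∃ B ∈ C, A ≠ B ∧ (A - B).rank = d) :
    C.card ≤ q ^ (max m n * (min m n - d + 1)) :=
  singleton_like_bound_general q m n d F hF C hmin hach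
end

section
/- Let s and m be coprime positive integers and let f = f_0 X + f_1 X^{q^s} + ... + f_k X^{q^{sk}} be a q^s-linearized polynomial over F_{q^m} with f_k ≠ 0. If f has exactly q^k roots in F_{q^m}, then N_{q^{sm}/q^s}(f_0) = (−1)^{km} · N_{q^{sm}/q^s}(f_k), where N_{q^{sm}/q^s}(x) = x^{(q^{sm}−1)/(q^s−1)} is the norm. -/
/-!
Induction on `k`. A nonzero root `β` of `f` gives `b = β ^ (q ^ s - 1)` and a right division
`f = G ∘ (X ^ q ^ s - b X) + (f₀ + G₀ b) X` of `q ^ s`-linearized polynomials, where `G` has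
`q ^ s`-degree one less and the same leading coefficient; evaluating at `β` kills the remainder,
so `f₀ = -b G₀`. As `s` and `m` are coprime, each fibre of `x ↦ x ^ q ^ s - b x` on `F_{q^m}` is
a translate of `β F_q`, so `G` keeps at least `q ^ (k - 1)` roots. Finally `N(b) = 1`, being
`β ^ (q ^ (sm) - 1)`, and `N(-1) = (-1) ^ m`.
-/

open Finset

theorem pow_eq_self_of_pow_pow_eq_self {M : Type*} [Monoid M] {z : M} {q s m : ℕ}
    (hsm : s.Coprime m) (hs : z ^ q ^ s = z) (hm : z ^ q ^ m = z) : z ^ q = z := by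
  have h : Function.IsPeriodicPt (· ^ q) (s.gcd m) z :=
    Function.IsPeriodicPt.gcd (by simpa [Function.IsPeriodicPt, Function.IsFixedPt, pow_iterate])
      (by simpa [Function.IsPeriodicPt, Function.IsFixedPt, pow_iterate])
  simpa [hsm.gcd_eq_one, Function.IsPeriodicPt, Function.IsFixedPt] using h

theorem pow_geom_sum_mul_eq_pow_pow {M : Type*} [CommMonoid M] {b β : M} {Q : ℕ}
    (h : b * β = β ^ Q) (n : ℕ) : b ^ (∑ i ∈ range n, Q ^ i) * β = β ^ Q ^ n := by
  induction n with
  | zero => simp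
  | succ n ih =>
    calc b ^ (∑ i ∈ range (n + 1), Q ^ i) * β
        = b ^ Q ^ n * (b ^ (∑ i ∈ range n, Q ^ i) * β) := by
          rw [sum_range_succ, pow_add, mul_comm (b ^ _) (b ^ Q ^ n), mul_assoc]
      _ = (b * β) ^ Q ^ n := by rw [ih, mul_pow]
      _ = β ^ Q ^ (n + 1) := by rw [h, ← pow_mul, pow_succ']

theorem Set.ncard_preimage_le_mul_ncard {α β : Type*} [Finite α] (D : α → β) {T : Set β}
    (hT : T.Finite) {c : ℕ} (hfib : ∀ y, {x | D x = y}.ncard ≤ c) :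
    (D ⁻¹' T).ncard ≤ c * T.ncard := by
  classical
  have hpre : (D ⁻¹' T).Finite := Set.toFinite _
  rw [Set.ncard_eq_toFinset_card _ hpre, Set.ncard_eq_toFinset_card _ hT]
  refine card_le_mul_card_image_of_maps_to (f := D) (by simp) c fun y _ => (hfib y).trans' ?_
  rw [← Set.ncard_coe_finset]
  exact Set.ncard_le_ncard (by intro x; simp) (Set.toFinite _)

theorem ncard_setOf_pow_eq_self_le {K : Type*} [Field K] {q : ℕ} (hq : 1 < q) :
    {z : K | z ^ q = z}.ncard ≤ q := by
  have hP : (Polynomial.X ^ q - Polynomial.X : Polynomial K) ≠ 0 :=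
    FiniteField.X_pow_card_sub_X_ne_zero K hq
  calc {z : K | z ^ q = z}.ncard
      = ((Polynomial.X ^ q - Polynomial.X : Polynomial K).rootSet K).ncard := by
        congr 1; ext z; simp [Polynomial.mem_rootSet, hP, sub_eq_zero]
    _ ≤ _ := Polynomial.ncard_rootSet_le _ _
    _ = q := FiniteField.X_pow_card_sub_X_natDegree_eq K hq

theorem exists_backward_recurrence {R : Type*} [Semiring R] (f c : ℕ → R) (n : ℕ) :
    ∃ G : ℕ → R, G n = 0 ∧ ∀ i < n, G i = f (i + 1) + G (i + 1) * c (i + 1) := by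
  let H : ℕ → R := fun j => Nat.rec 0 (fun j h => f (n - j) + h * c (n - j)) j
  refine ⟨fun i => H (n - i), by simp [H], fun i hi => ?_⟩
  obtain ⟨j, rfl⟩ : ∃ j, n = i + j + 1 := ⟨n - i - 1, by omega⟩
  have h1 : i + j + 1 - i = j + 1 := by omega
  have h2 : i + j + 1 - (i + 1) = j := by omega
  have h3 : i + j + 1 - j = i + 1 := by omega
  simp only [h1, h2, H, h3]

section FiniteField

variable {K : Type*} [Field K] [Fintype K] {q m : ℕ}

theorem one_lt_of_card_eq_pow (hK : Fintype.card K = q ^ m) : 1 < q := by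
  have h := hK ▸ Fintype.one_lt_card (α := K)
  by_contra! hq
  exact h.not_ge (pow_le_one' hq m)

theorem exists_expChar_pow_eq (hK : Fintype.card K = q ^ m) : ∃ p e, ExpChar K p ∧ p ^ e = q := by
  obtain ⟨p, _, n, hp, hcard⟩ := FiniteField.card' K
  have hm : m ≠ 0 := by
    rintro rfl
    exact (Fintype.one_lt_card (α := K)).ne' (by simpa using hK)
  obtain ⟨e, -, he⟩ := (Nat.dvd_prime_pow hp).mp (hcard ▸ hK ▸ dvd_pow_self q hm)
  exact ⟨p, e, ExpChar.prime hp, he.symm⟩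

theorem sub_pow_pow_of_card_eq_pow (hK : Fintype.card K = q ^ m) (x y : K) (n : ℕ) :
    (x - y) ^ q ^ n = x ^ q ^ n - y ^ q ^ n := by
  obtain ⟨p, e, _, rfl⟩ := exists_expChar_pow_eq hK
  simp only [← pow_mul, sub_pow_expChar_pow]

theorem neg_one_pow_geom_sum (hK : Fintype.card K = q ^ m) (s : ℕ) :
    (-1 : K) ^ (∑ i ∈ range m, (q ^ s) ^ i) = (-1) ^ m := by
  obtain ⟨p, e, _, rfl⟩ := exists_expChar_pow_eq hK
  simp [← prod_pow_eq_pow_sum, ← pow_mul, neg_one_pow_expChar_pow]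

theorem pow_geom_sum_eq_one (hK : Fintype.card K = q ^ m) {s : ℕ} {b β : K} (hβ : β ≠ 0)
    (hb : b * β = β ^ q ^ s) : b ^ (∑ i ∈ range m, (q ^ s) ^ i) = 1 := by
  have h := pow_geom_sum_mul_eq_pow_pow hb m
  rwa [← pow_mul, mul_comm s m, pow_mul, ← hK, FiniteField.pow_card_pow, mul_eq_right₀ hβ] at h

theorem ncard_setOf_pow_pow_sub_mul_eq_le (hK : Fintype.card K = q ^ m) {s : ℕ}
    (hsm : s.Coprime m) {b β : K} (hβ : β ≠ 0) (hb : b * β = β ^ q ^ s) (y : K) :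
    {x : K | x ^ q ^ s - b * x = y}.ncard ≤ q := by
  rcases {x : K | x ^ q ^ s - b * x = y}.eq_empty_or_nonempty with h | ⟨x₀, hx₀⟩
  · simp [h]
  have hb0 : b ≠ 0 := left_ne_zero_of_mul (hb ▸ pow_ne_zero _ hβ)
  refine (Set.ncard_le_ncard_of_injOn (fun x => (x - x₀) / β) (fun x hx => ?_) ?_
    (Set.toFinite _)).trans (ncard_setOf_pow_eq_self_le (one_lt_of_card_eq_pow hK))
  · have hx' : x ^ q ^ s - b * x = y := hx
    have hx₀' : x₀ ^ q ^ s - b * x₀ = y := hx₀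
    have hd : (x - x₀) ^ q ^ s = b * (x - x₀) := by
      rw [sub_pow_pow_of_card_eq_pow hK]
      linear_combination hx' - hx₀'
    refine pow_eq_self_of_pow_pow_eq_self hsm ?_ (by rw [← hK, FiniteField.pow_card])
    rw [div_pow, hd, ← hb]
    field_simp
  · intro x _ x' _ h
    simpa [hβ] using h

end FiniteField

def linearizedEval {R : Type*} [Semiring R] (q s k : ℕ) (f : ℕ → R) (x : R) : R :=
  ∑ i ∈ range (k + 1), f i * x ^ q ^ (s * i)

theorem linearizedEval_zero {R : Type*} [Semiring R] {q : ℕ} (hq : q ≠ 0) (s k : ℕ)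
    (f : ℕ → R) :
    linearizedEval q s k f 0 = 0 := by
  simp [linearizedEval, hq]

theorem linearizedEval_succ_eq {K : Type*} [Field K] [Fintype K] {q m s k : ℕ}
    (hK : Fintype.card K = q ^ m) (b : K) {f G : ℕ → K} (hG : G (k + 1) = 0)
    (hf : ∀ i < k + 1, G i = f (i + 1) + G (i + 1) * b ^ q ^ (s * (i + 1))) (x : K) :
    linearizedEval q s (k + 1) f x
      = linearizedEval q s k G (x ^ q ^ s - b * x) + (f 0 + G 0 * b) * x := by
  set a : ℕ → K := fun i => G i * b ^ q ^ (s * i) * x ^ q ^ (s * i)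
  have hterm : ∀ i ∈ range (k + 1), f (i + 1) * x ^ q ^ (s * (i + 1))
      = G i * (x ^ q ^ s - b * x) ^ q ^ (s * i) + (a i - a (i + 1)) := by
    intro i hi
    rw [sub_pow_pow_of_card_eq_pow hK, mul_pow]
    linear_combination (-x ^ q ^ (s * (i + 1))) * hf i (mem_range.mp hi)
  unfold linearizedEval
  rw [sum_range_succ', sum_congr rfl hterm, sum_add_distrib, sum_range_sub']
  simp only [mul_zero, pow_zero, pow_one, hG, zero_mul, sub_zero, a]
  ring

theorem norm_eq_of_pow_le_ncard_roots {K : Type*} [Field K] [Fintype K] {q m s : ℕ}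
    (hK : Fintype.card K = q ^ m) (hsm : s.Coprime m) (k : ℕ) (f : ℕ → K)
    (h : q ^ k ≤ {x : K | linearizedEval q s k f x = 0}.ncard) :
    f 0 ^ (∑ i ∈ range m, (q ^ s) ^ i)
      = (-1) ^ (k * m) * f k ^ (∑ i ∈ range m, (q ^ s) ^ i) := by
  induction k generalizing f with
  | zero => simp
  | succ k ih =>
    have hq := one_lt_of_card_eq_pow hK
    obtain ⟨β, hβroot, hβ⟩ :=
      Set.exists_ne_of_one_lt_ncard ((Nat.one_lt_pow k.succ_ne_zero hq).trans_le h) 0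
    set b := β ^ q ^ s / β
    have hb : b * β = β ^ q ^ s := div_mul_cancel₀ _ hβ
    obtain ⟨G, hGtop, hGrec⟩ := exists_backward_recurrence f (fun i => b ^ q ^ (s * i)) (k + 1)
    have hfactor := linearizedEval_succ_eq hK b hGtop hGrec
    have hconst : f 0 + G 0 * b = 0 := by
      have hβ' := hfactor β
      rw [show linearizedEval q s (k + 1) f β = 0 from hβroot, hb, sub_self,
        linearizedEval_zero (by omega), zero_add] at hβ'
      exact (mul_eq_zero.mp hβ'.symm).resolve_right hβ
    have hroots : {x | linearizedEval q s (k + 1) f x = 0}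
        = (fun x => x ^ q ^ s - b * x) ⁻¹' {x | linearizedEval q s k G x = 0} := by
      ext x
      simp [hfactor, hconst]
    have hG : q ^ k ≤ {x | linearizedEval q s k G x = 0}.ncard := by
      have hle := (hroots ▸ h).trans <| Set.ncard_preimage_le_mul_ncard _ (Set.toFinite _)
        (ncard_setOf_pow_pow_sub_mul_eq_le hK hsm hβ hb)
      rw [pow_succ'] at hle
      exact Nat.le_of_mul_le_mul_left hle (by omega)
    have hGk : G k = f (k + 1) := by simpa [hGtop] using hGrec k (by omega)
    rw [eq_neg_of_add_eq_zero_left hconst, neg_pow, mul_pow, neg_one_pow_geom_sum hK,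
      pow_geom_sum_eq_one hK hβ hb, ih G hG, hGk]
    ring

theorem gow_quinlan_norm_of_full_kernel_general (q s m k : ℕ)
    (hsm : Nat.Coprime s m)
    (K : Type*) [Field K] [Fintype K] (hK : Fintype.card K = q ^ m)
    (f : ℕ → K)
    (hroots : Set.ncard {x : K | ∑ i ∈ Finset.range (k + 1), f i * x ^ q ^ (s * i) = 0}
      = q ^ k) :
    (f 0) ^ (∑ i ∈ Finset.range m, (q ^ s) ^ i)
      = (-1) ^ (k * m) * (f k) ^ (∑ i ∈ Finset.range m, (q ^ s) ^ i) :=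
  norm_eq_of_pow_le_ncard_roots hK hsm k f hroots.ge

/-- (Gow–Quinlan) Let `gcd(s,m)=1` and let `f = f₀ X + f₁ X^{q^s} + ⋯ + f_k X^{q^{sk}}`
be a `q^s`-linearized polynomial over `F_{q^m}` with `f_k ≠ 0`.  If `f` has exactly
`q^k` roots in `F_{q^m}`, then `N_{q^{sm}/q^s}(f₀) = (-1)^{km} · N_{q^{sm}/q^s}(f_k)`,
where `N_{q^{sm}/q^s}(x) = x^{1 + q^s + ⋯ + q^{s(m-1)}}`. -/
theorem gow_quinlan_norm_of_full_kernel (q s m k : ℕ) (hs : 0 < s) (hm : 0 < m)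
    (hsm : Nat.Coprime s m)
    (K : Type*) [Field K] [Fintype K] (hK : Fintype.card K = q ^ m)
    (f : ℕ → K) (hfk : f k ≠ 0)
    (hroots : Set.ncard {x : K | ∑ i ∈ Finset.range (k + 1), f i * x ^ q ^ (s * i) = 0}
      = q ^ k) :
    (f 0) ^ (∑ i ∈ Finset.range m, (q ^ s) ^ i)
      = (-1) ^ (k * m) * (f k) ^ (∑ i ∈ Finset.range m, (q ^ s) ^ i) :=
  gow_quinlan_norm_of_full_kernel_general q s m k hsm K hK f hroots
end

section
/- Let s and n be coprime positive integers with gcd(s,n)=1 and 1 ≤ k ≤ n. The generalized Gabidulin code G_{k,s} = { a_0 x + a_1 x^{q^s} + ... + a_{k−1} x^{q^{s(k−1)}} : a_i ∈ F_{q^n} }, viewed as a set of F_q-linear maps on F_{q^n}, has q^{kn} elements and every nonzero element has rank at least n−k+1; hence G_{k,s} is a maximum rank-distance code. -/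
/-!
Let `φ` be the Frobenius `x ↦ x ^ q` of `K = F_{q^n}` and `σ = φ ^ s`, so that a code word is
`x ↦ ∑ aᵢ σⁱ x`. As `gcd(s, n) = 1`, `σ` still has order `n`; hence `σ⁰, …, σ^{k-1}` are distinct
characters `K →* K`, and Artin's independence of characters makes the coefficient map injective,
which gives `q^{kn}` code words. For the rank bound, a nonzero root `v` of a nonzero code word `f`
lets one divide `f` on the right by `x ↦ σ x - (σ v / v) x`, leaving a word of `σ`-degree one less.
The kernel of that divisor is a line over the fixed field of `σ`, which is `F_q` again by
coprimality, so induction gives `|ker f| ≤ q^{k-1}` and hence `|im f| ≥ q^{n-k+1}`.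
-/

open Function Polynomial

namespace AddMonoidHom

variable {G H I : Type*} [AddGroup G] [AddGroup H] [AddGroup I]

theorem card_ker_comp_le [Finite H] (f : G →+ H) (g : H →+ I) :
    Nat.card (g.comp f).ker ≤ Nat.card f.ker * Nat.card g.ker := by
  have hle : f.ker ≤ (g.comp f).ker := fun x hx => by simp_all [mem_ker]
  rw [← AddSubgroup.relIndex_bot_left, ← AddSubgroup.relIndex_bot_left f.ker,
    ← AddSubgroup.relIndex_mul_relIndex ⊥ f.ker _ bot_le hle, AddSubgroup.relIndex_ker,
    AddSubgroup.relIndex_bot_left]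
  refine Nat.mul_le_mul_left _ (AddSubgroup.card_le_of_le ?_)
  rintro _ ⟨x, hx, rfl⟩
  exact hx

theorem card_ker_mul_ncard_range [Finite G] (f : G →+ H) :
    Nat.card f.ker * (Set.range f).ncard = Nat.card G := by
  rw [← coe_range, ← Nat.card_coe_set_eq, SetLike.coe_sort_coe, ← AddSubgroup.index_ker]
  exact f.ker.card_mul_index

theorem pow_sub_le_ncard_range [Finite G] (f : G →+ H) {q n m : ℕ} (hq : 0 < q) (hmn : m ≤ n)
    (hG : Nat.card G = q ^ n) (hker : Nat.card f.ker ≤ q ^ m) :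
    q ^ (n - m) ≤ (Set.range f).ncard := by
  refine Nat.le_of_mul_le_mul_right ?_ (pow_pos hq m)
  calc q ^ (n - m) * q ^ m = Nat.card f.ker * (Set.range f).ncard := by
        rw [← pow_add, Nat.sub_add_cancel hmn, ← hG, card_ker_mul_ncard_range]
    _ ≤ q ^ m * (Set.range f).ncard := Nat.mul_le_mul_right _ hker
    _ = (Set.range f).ncard * q ^ m := mul_comm _ _

end AddMonoidHom

theorem Function.fixedPoints_iterate_subset_of_coprime {α : Type*} {f : α → α} {s n : ℕ}
    (hf : f^[n] = id) (hs : s.Coprime n) : fixedPoints f^[s] ⊆ fixedPoints f := fun x hx => by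
  have hn : IsPeriodicPt f n x := by rw [IsPeriodicPt, hf]; exact isFixedPt_id x
  have h1 := (show IsPeriodicPt f s x from hx).gcd hn
  rwa [hs.gcd_eq_one, IsPeriodicPt, iterate_one] at h1

theorem card_setOf_pow_eq_self_le {K : Type*} [Field K] {m : ℕ} (hm : 2 ≤ m) :
    Nat.card {x : K | x ^ m = x} ≤ m := by
  classical
  have hdeg : (X ^ m - X : K[X]).natDegree = m := FiniteField.X_pow_card_sub_X_natDegree_eq K hm
  have hP : (X ^ m - X : K[X]) ≠ 0 := fun h => by simp [h] at hdeg; omega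
  calc Nat.card {x : K | x ^ m = x}
      ≤ Nat.card ((X ^ m - X : K[X]).roots.toFinset : Set K) :=
        Nat.card_mono (Finset.finite_toSet _) fun x hx => by
          simp_all [Multiset.mem_toFinset, mem_roots hP, sub_eq_zero]
    _ ≤ (X ^ m - X : K[X]).natDegree := by
        rw [Nat.card_coe_set_eq, Set.ncard_coe_finset]
        exact (Multiset.toFinset_card_le _).trans (card_roots' _)
    _ = m := hdeg

section LinearizedMap

variable {K : Type*} [Field K] (σ : K →+* K)

def linearizedMap {k : ℕ} (a : Fin k → K) : K →+ K where
  toFun x := ∑ i, a i * (σ ^ (i : ℕ)) x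
  map_zero' := by simp
  map_add' x y := by simp [mul_add, Finset.sum_add_distrib]

variable {σ}

@[simp]
theorem linearizedMap_apply {k : ℕ} (a : Fin k → K) (x : K) :
    linearizedMap σ a x = ∑ i, a i * (σ ^ (i : ℕ)) x := rfl

@[simp]
theorem linearizedMap_fin_zero (a : Fin 0 → K) : linearizedMap σ a = 0 := by
  ext; simp

theorem linearizedMap_add {k : ℕ} (a b : Fin k → K) :
    linearizedMap σ (a + b) = linearizedMap σ a + linearizedMap σ b := by
  ext; simp [add_mul, Finset.sum_add_distrib]

theorem linearizedMap_snoc_zero {k : ℕ} (a : Fin k → K) :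
    linearizedMap σ (Fin.snoc a 0 : Fin (k + 1) → K) = linearizedMap σ a := by
  ext; simp [Fin.sum_univ_castSucc]

theorem linearizedMap_apply_eq_add_tail {k : ℕ} (a : Fin (k + 1) → K) (x : K) :
    linearizedMap σ a x = a 0 * x + linearizedMap σ (Fin.tail a) (σ x) := by
  simp [Fin.sum_univ_succ, Fin.tail]

theorem linearizedMap_apply_mul {k : ℕ} (a : Fin k → K) (c x : K) :
    linearizedMap σ a (c * x) = linearizedMap σ (fun i => a i * (σ ^ (i : ℕ)) c) x := by
  simp [mul_assoc]

/-- Right division by `x ↦ σ x - c * x` in the ring of `σ`-linearized polynomials. -/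
theorem exists_linearizedMap_eq_comp_sub_add_mul {k : ℕ} (a : Fin (k + 1) → K) (c : K) :
    ∃ (b : Fin k → K) (r : K), ∀ x,
      linearizedMap σ a x = linearizedMap σ b (σ x - c * x) + r * x := by
  induction k with
  | zero => exact ⟨Fin.elim0, a 0, fun x => by simp⟩
  | succ k ih =>
    obtain ⟨b, r, hbr⟩ := ih (fun i => Fin.tail a i * (σ ^ (i : ℕ)) c)
    refine ⟨Fin.tail a + Fin.snoc b 0, a 0 + r, fun x => ?_⟩
    have hσx : σ x = (σ x - c * x) + c * x := by ring
    rw [linearizedMap_apply_eq_add_tail, hσx, map_add, linearizedMap_apply_mul, hbr,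
      linearizedMap_add, linearizedMap_snoc_zero, ← hσx]
    simp only [AddMonoidHom.add_apply]
    ring

theorem exists_linearizedMap_eq_comp_of_apply_eq_zero {k : ℕ} (a : Fin (k + 1) → K) {v : K}
    (hv : v ≠ 0) (hav : linearizedMap σ a v = 0) :
    ∃ (c : K) (b : Fin k → K),
      linearizedMap σ a = (linearizedMap σ b).comp (σ.toAddMonoidHom - AddMonoidHom.mulLeft c) := by
  obtain ⟨b, r, hbr⟩ := exists_linearizedMap_eq_comp_sub_add_mul a (σ v / v)
  have hr : r = 0 := by
    have h := hbr v
    rw [hav, div_mul_cancel₀ _ hv, sub_self, map_zero, zero_add] at h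
    exact (mul_eq_zero.1 h.symm).resolve_right hv
  exact ⟨σ v / v, b, AddMonoidHom.ext fun x => by rw [hbr x, hr, zero_mul, add_zero]; rfl⟩

theorem linearizedMap_injective {k : ℕ} (hσ : Set.InjOn (σ ^ ·) (Set.Iio k)) :
    Injective (linearizedMap σ : (Fin k → K) → K →+ K) := by
  have hli := (linearIndependent_monoidHom K K).comp
    (fun i : Fin k => ((σ ^ (i : ℕ) : K →+* K) : K →* K))
    fun i j h => Fin.ext (hσ i.2 j.2 (RingHom.coe_monoidHom_injective h))
  intro a b hab
  have hab' : ∑ i, (a - b) i • ⇑((σ ^ (i : ℕ) : K →+* K) : K →* K) = 0 := by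
    funext x
    simpa [sub_mul, sub_eq_zero] using DFunLike.congr_fun hab x
  funext i
  exact sub_eq_zero.1 (Fintype.linearIndependent_iff.1 hli _ hab' i)

variable [Finite K]

theorem card_ker_sub_mulLeft_le (c : K) :
    Nat.card (σ.toAddMonoidHom - AddMonoidHom.mulLeft c).ker ≤ Nat.card (fixedPoints σ) := by
  obtain hbot | ⟨z, hz, hz0⟩ := (σ.toAddMonoidHom - AddMonoidHom.mulLeft c).ker.bot_or_exists_ne_zero
  · have : Nonempty (fixedPoints σ) := ⟨⟨0, map_zero σ⟩⟩
    rw [hbot, AddSubgroup.card_bot]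
    exact Nat.card_pos
  have hker (w : K) : w ∈ (σ.toAddMonoidHom - AddMonoidHom.mulLeft c).ker ↔ σ w = c * w := by
    simp [sub_eq_zero]
  have hc : c ≠ 0 := by
    rintro rfl
    exact hz0 (by simpa using (hker z).1 hz)
  refine Nat.card_le_card_of_injective (fun w => ⟨w / z, ?_⟩) fun w w' h => ?_
  · rw [mem_fixedPoints, IsFixedPt, map_div₀, (hker w).1 w.2, (hker z).1 hz, mul_div_mul_left _ _ hc]
  · simpa [div_left_inj' hz0] using h

theorem card_ker_linearizedMap_le {k : ℕ} (a : Fin (k + 1) → K) (ha : linearizedMap σ a ≠ 0) :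
    Nat.card (linearizedMap σ a).ker ≤ Nat.card (fixedPoints σ) ^ k := by
  obtain hbot | ⟨v, hv, hv0⟩ := (linearizedMap σ a).ker.bot_or_exists_ne_zero
  · have : Nonempty (fixedPoints σ) := ⟨⟨0, map_zero σ⟩⟩
    rw [hbot, AddSubgroup.card_bot]
    exact Nat.one_le_pow _ _ Nat.card_pos
  obtain ⟨c, b, hab⟩ := exists_linearizedMap_eq_comp_of_apply_eq_zero a hv0 hv
  cases k with
  | zero => exact absurd (by rw [hab, linearizedMap_fin_zero, AddMonoidHom.zero_comp]) ha
  | succ k =>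
    have hb : linearizedMap σ b ≠ 0 := fun hb => ha (by rw [hab, hb, AddMonoidHom.zero_comp])
    calc Nat.card (linearizedMap σ a).ker
        ≤ Nat.card (σ.toAddMonoidHom - AddMonoidHom.mulLeft c).ker *
            Nat.card (linearizedMap σ b).ker :=
          hab ▸ AddMonoidHom.card_ker_comp_le _ _
      _ ≤ Nat.card (fixedPoints σ) * Nat.card (fixedPoints σ) ^ k :=
          Nat.mul_le_mul (card_ker_sub_mulLeft_le c) (card_ker_linearizedMap_le b hb)
      _ = Nat.card (fixedPoints σ) ^ (k + 1) := (pow_succ' _ _).symm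

end LinearizedMap

theorem RingHom.pow_apply_eq_pow_pow {K : Type*} [CommRing K] {φ : K →+* K} {q : ℕ}
    (hφ : ∀ x, φ x = x ^ q) (m : ℕ) (x : K) : (φ ^ m) x = x ^ q ^ m := by
  rw [RingHom.coe_pow, funext hφ, pow_iterate]

section FiniteField

variable {K : Type*} [Field K] [Fintype K] {q n : ℕ}

theorem exists_ringHom_apply_eq_pow (hK : Fintype.card K = q ^ n) (hn : n ≠ 0) :
    ∃ φ : K →+* K, ∀ x, φ x = x ^ q := by
  obtain ⟨d, hp, hd⟩ := FiniteField.card K (ringChar K)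
  have : Fact (ringChar K).Prime := ⟨hp⟩
  obtain ⟨e, -, rfl⟩ := (Nat.dvd_prime_pow hp).1 (hd ▸ hK ▸ dvd_pow_self q hn)
  exact ⟨iterateFrobenius K (ringChar K) e, iterateFrobenius_def _ _⟩

theorem two_le_of_card_eq_pow (hK : Fintype.card K = q ^ n) (hn : n ≠ 0) : 2 ≤ q := by
  have := Fintype.one_lt_card (α := K)
  rcases q with _ | _ | q <;> simp_all

variable {φ : K →+* K}

theorem orderOf_eq_of_apply_eq_pow (hφ : ∀ x, φ x = x ^ q) (hK : Fintype.card K = q ^ n) (hn : 0 < n) : orderOf φ = n := by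
  have hq := two_le_of_card_eq_pow hK hn.ne'
  refine (orderOf_eq_iff hn).2 ⟨RingHom.ext fun x => ?_, fun m hmn hm h => ?_⟩
  · rw [RingHom.pow_apply_eq_pow_pow hφ, ← hK, FiniteField.pow_card]
    rfl
  have hcard := card_setOf_pow_eq_self_le (K := K) (le_trans hq (Nat.le_self_pow hm.ne' q))
  have huniv : {x : K | x ^ q ^ m = x} = Set.univ :=
    Set.eq_univ_of_forall fun x => by rw [Set.mem_ofPred_eq, ← RingHom.pow_apply_eq_pow_pow hφ, h]; rfl
  rw [huniv, Nat.card_univ, Nat.card_eq_fintype_card, hK] at hcard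
  exact (Nat.pow_lt_pow_right hq hmn).not_ge hcard

theorem card_fixedPoints_pow_le (hφ : ∀ x, φ x = x ^ q) (hK : Fintype.card K = q ^ n) (hn : 0 < n)
    {s : ℕ} (hs : s.Coprime n) :
    Nat.card (fixedPoints (φ ^ s)) ≤ q := by
  have hφn : (⇑φ)^[n] = id := by
    rw [← RingHom.coe_pow, ← orderOf_eq_of_apply_eq_pow hφ hK hn, pow_orderOf_eq_one]
    rfl
  calc Nat.card (fixedPoints (φ ^ s)) ≤ Nat.card {x : K | x ^ q = x} := by
        refine Nat.card_mono (Set.toFinite _) fun x hx => ?_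
        rw [RingHom.coe_pow] at hx
        simpa [IsFixedPt, hφ] using fixedPoints_iterate_subset_of_coprime hφn hs hx
    _ ≤ q := card_setOf_pow_eq_self_le (two_le_of_card_eq_pow hK hn.ne')

end FiniteField


/-- The generalized Gabidulin code `G_{k,s}` over `F_{q^n}` (with `gcd(s,n)=1`,
`1 ≤ k ≤ n`), viewed as a set of `F_q`-linear maps on `F_{q^n}`, has `q^{kn}`
elements, and every nonzero element has rank at least `n - k + 1` (i.e. its image,
an `F_q`-subspace, has at least `q^{n-k+1}` elements); hence it is MRD. -/
theorem gabidulin_is_MRD (q s n k : ℕ) (hn : 0 < n) (hs : Nat.Coprime s n)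
    (hk1 : 1 ≤ k) (hkn : k ≤ n)
    (K : Type*) [Field K] [Fintype K] (hK : Fintype.card K = q ^ n) :
    Set.ncard {f : K → K | ∃ a : Fin k → K,
        f = fun x => ∑ i, a i * x ^ q ^ (s * (i : ℕ))} = q ^ (k * n) ∧
    ∀ f ∈ {f : K → K | ∃ a : Fin k → K,
        f = fun x => ∑ i, a i * x ^ q ^ (s * (i : ℕ))},
      f ≠ 0 → q ^ (n - k + 1) ≤ Set.ncard (Set.range f) := by
  obtain ⟨φ, hφ⟩ := exists_ringHom_apply_eq_pow hK hn.ne'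
  have hφn := orderOf_eq_of_apply_eq_pow hφ hK hn
  have hσn : orderOf (φ ^ s) = n := by rw [Nat.Coprime.orderOf_pow (hφn ▸ hs.symm), hφn]
  have hcode : {f : K → K | ∃ a : Fin k → K, f = fun x => ∑ i, a i * x ^ q ^ (s * (i : ℕ))} =
      Set.range fun a : Fin k → K => ⇑(linearizedMap (φ ^ s) a) := by
    ext f
    simp only [Set.mem_ofPred_eq, Set.mem_range, eq_comm (a := f)]
    refine exists_congr fun a => iff_of_eq (congrArg (· = f) (funext fun x => ?_))
    simp [← pow_mul, RingHom.pow_apply_eq_pow_pow hφ]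
  rw [hcode]
  refine ⟨?_, ?_⟩
  · have hinj := linearizedMap_injective (σ := φ ^ s) (k := k)
      (pow_injOn_Iio_orderOf.mono (Set.Iio_subset_Iio (hσn ▸ hkn)))
    rw [Set.ncard_range_of_injective (f := fun a : Fin k → K => ⇑(linearizedMap (φ ^ s) a))
        (DFunLike.coe_injective.comp hinj), Nat.card_fun,
      Nat.card_eq_fintype_card, hK, Nat.card_fin, ← pow_mul, mul_comm]
  · rintro _ ⟨a, rfl⟩ ha
    obtain ⟨k, rfl⟩ := Nat.exists_eq_add_of_le' hk1
    have hker : Nat.card (linearizedMap (φ ^ s) a).ker ≤ q ^ k :=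
      (card_ker_linearizedMap_le a fun h => ha (congrArg DFunLike.coe h)).trans
        (Nat.pow_le_pow_left (card_fixedPoints_pow_le hφ hK hn hs) k)
    have hq := two_le_of_card_eq_pow hK hn.ne'
    have hrank := (linearizedMap (φ ^ s) a).pow_sub_le_ncard_range (by omega) (by omega : k ≤ n)
      (by rw [Nat.card_eq_fintype_card, hK]) hker
    rwa [show n - (k + 1) + 1 = n - k by omega]
end

section
/- With γ ∈ F_{q^{2n}} such that N_{q^{2n}/q}(γ) is a non-square in F_q, if a, b ∈ F_{q^n} are both nonzero then N_{q^{2sn}/q^s}(a/b) = N_{q^n/q}(a/b)^2 is a square in F_q, and in particular N_{q^{2sn}/q^s}(a/b) ≠ N_{q^{2n}/q}(γ). -/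
/-! Put `x = a / b`. Since `x ^ q ^ n = x`, the conjugate `x ^ q ^ k` depends only on `k mod n`.
As `s` is prime to `n`, the exponents `s * i` for `i < 2 * n` run twice through the residues
mod `n`, so `x ^ (∑ i < 2n, q ^ (s * i)) = (x ^ (∑ i < n, q ^ i)) ^ 2`; and the base of this square
is fixed by `y ↦ y ^ q` because `i ↦ i + 1` also permutes the residues, so it lies in `𝔽_q`. -/

open Finset

theorem Function.Periodic.prod_range_mul_add {M : Type*} [CommMonoid M] {f : ℕ → M} {n : ℕ}
    (hf : Function.Periodic f n) {s : ℕ} (hs : s.Coprime n) (t : ℕ) :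
    ∏ i ∈ range n, f (s * i + t) = ∏ i ∈ range n, f i := by
  have hmaps : Set.MapsTo (fun i => (s * i + t) % n) (range n) (range n) := fun i hi =>
    mem_range.2 (Nat.mod_lt _ (Nat.zero_lt_of_lt (mem_range.1 hi)))
  have hinj : Set.InjOn (fun i => (s * i + t) % n) (range n) := fun i hi j hj hij => by
    have hij : s * i ≡ s * j [MOD n] := Nat.ModEq.add_right_cancel' t hij
    have := Nat.ModEq.cancel_left_of_coprime (Nat.coprime_comm.1 hs) hij
    rwa [Nat.ModEq, Nat.mod_eq_of_lt (mem_range.1 hi), Nat.mod_eq_of_lt (mem_range.1 hj)] at this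
  exact prod_nbij _ hmaps hinj (surjOn_of_injOn_of_card_le _ hmaps hinj le_rfl)
    fun i _ => (hf.map_mod_nat _).symm

theorem periodic_pow_pow_of_pow_pow_eq_self {M : Type*} [Monoid M] {x : M} {q n : ℕ}
    (hx : x ^ q ^ n = x) : Function.Periodic (fun k => x ^ q ^ k) n := fun k => by
  simp only [pow_add, mul_comm (q ^ k), pow_mul, hx]

section

variable {M : Type*} [CommMonoid M] {x : M} {q n : ℕ}

theorem pow_geom_sum_pow_pow_eq_sq (hx : x ^ q ^ n = x) {s : ℕ} (hs : s.Coprime n) :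
    x ^ (∑ i ∈ range (2 * n), (q ^ s) ^ i) = (x ^ (∑ i ∈ range n, q ^ i)) ^ 2 := by
  have hper := periodic_pow_pow_of_pow_pow_eq_self hx
  calc x ^ (∑ i ∈ range (2 * n), (q ^ s) ^ i)
      = (∏ i ∈ range n, x ^ q ^ (s * i + 0)) * ∏ i ∈ range n, x ^ q ^ (s * i + s * n) := by
        simp only [← prod_pow_eq_pow_sum, two_mul, prod_range_add, ← pow_mul, add_zero,
          mul_add, add_comm (s * n)]
    _ = (x ^ (∑ i ∈ range n, q ^ i)) ^ 2 := by
        rw [hper.prod_range_mul_add hs, hper.prod_range_mul_add hs, prod_pow_eq_pow_sum, sq]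

theorem pow_geom_sum_pow_eq_self (hx : x ^ q ^ n = x) :
    (x ^ (∑ i ∈ range n, q ^ i)) ^ q = x ^ (∑ i ∈ range n, q ^ i) := by
  have hper := periodic_pow_pow_of_pow_pow_eq_self hx
  calc (x ^ (∑ i ∈ range n, q ^ i)) ^ q = ∏ i ∈ range n, x ^ q ^ (1 * i + 1) := by
        rw [← pow_mul, sum_mul, ← prod_pow_eq_pow_sum]
        simp only [one_mul, pow_succ]
    _ = x ^ (∑ i ∈ range n, q ^ i) := by
        rw [hper.prod_range_mul_add (Nat.coprime_one_left n), prod_pow_eq_pow_sum]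

end

theorem norm_square_computation_general (q s n : ℕ) (hs : Nat.Coprime s (2 * n))
    (K : Type*) [Field K]
    (γ : K)
    (hγ : ¬ ∃ z : K, z ^ q = z ∧ z ^ 2 = γ ^ (∑ i ∈ Finset.range (2 * n), q ^ i))
    (a b : K) (ha : a ^ q ^ n = a) (hb : b ^ q ^ n = b) :
    (a / b) ^ (∑ i ∈ Finset.range (2 * n), (q ^ s) ^ i)
        = ((a / b) ^ (∑ i ∈ Finset.range n, q ^ i)) ^ 2 ∧
    (∃ z : K, z ^ q = z ∧
        z ^ 2 = (a / b) ^ (∑ i ∈ Finset.range (2 * n), (q ^ s) ^ i)) ∧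
    (a / b) ^ (∑ i ∈ Finset.range (2 * n), (q ^ s) ^ i)
        ≠ γ ^ (∑ i ∈ Finset.range (2 * n), q ^ i) := by
  have hab : (a / b) ^ q ^ n = a / b := by rw [div_pow, ha, hb]
  have hsq := pow_geom_sum_pow_pow_eq_sq hab hs.coprime_mul_left_right
  have hfix := pow_geom_sum_pow_eq_self hab
  exact ⟨hsq, ⟨_, hfix, hsq.symm⟩, fun h => hγ ⟨_, hfix, by rw [← h, hsq]⟩⟩

/-- Key norm computation: with `γ ∈ F_{q^{2n}}` such that `N_{q^{2n}/q}(γ)` is a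
non-square in `F_q`, if `a, b ∈ F_{q^n}` are both nonzero then
`N_{q^{2sn}/q^s}(a/b) = N_{q^n/q}(a/b)²` is a square in `F_q`, and in particular
`N_{q^{2sn}/q^s}(a/b) ≠ N_{q^{2n}/q}(γ)`. -/
theorem norm_square_computation (q s n : ℕ) (hn : 0 < n) (hs : Nat.Coprime s (2 * n))
    (K : Type*) [Field K] [Fintype K] (hK : Fintype.card K = q ^ (2 * n))
    (γ : K)
    (hγ : ¬ ∃ z : K, z ^ q = z ∧ z ^ 2 = γ ^ (∑ i ∈ Finset.range (2 * n), q ^ i))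
    (a b : K) (ha : a ^ q ^ n = a) (hb : b ^ q ^ n = b)
    (ha0 : a ≠ 0) (hb0 : b ≠ 0) :
    (a / b) ^ (∑ i ∈ Finset.range (2 * n), (q ^ s) ^ i)
        = ((a / b) ^ (∑ i ∈ Finset.range n, q ^ i)) ^ 2 ∧
    (∃ z : K, z ^ q = z ∧
        z ^ 2 = (a / b) ^ (∑ i ∈ Finset.range (2 * n), (q ^ s) ^ i)) ∧
    (a / b) ^ (∑ i ∈ Finset.range (2 * n), (q ^ s) ^ i)
        ≠ γ ^ (∑ i ∈ Finset.range (2 * n), q ^ i) :=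
  norm_square_computation_general q s n hs K γ hγ a b ha hb
end

section
/- The adjoint code of D_{k,s}(γ) equals (up to equivalence) D_{k,s}(1/γ), where the adjoint of f = Σ_{i=0}^{2n−1} a_i x^{q^i} is f̂ = Σ_{i=0}^{2n−1} a_i^{q^{2n−i}} x^{q^{2n−i}}. -/
/-- Coefficient-vector representation of `D_{k,s}(γ)`. -/
def DCoeff (q s n k : ℕ) {K : Type*} [Field K] (γ : K) : Set (Fin (2 * n) → K) :=
  {v | ∃ a b : K, a ^ q ^ n = a ∧ b ^ q ^ n = b ∧ ∃ c : ℕ → K,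
    v = fun j : Fin (2 * n) => (if (j : ℕ) = 0 then a else 0)
      + (∑ i ∈ Finset.Ioo 0 k, if (j : ℕ) = (s * i) % (2 * n) then c i else 0)
      + (if (j : ℕ) = (s * k) % (2 * n) then γ * b else 0)}

/-- The adjoint of a coefficient vector: `f = Σᵢ aᵢ x^{q^i}` is sent to
`f̂ = Σᵢ aᵢ^{q^{2n-i}} x^{q^{2n-i}}`. -/
def adjCoeff (q n : ℕ) {K : Type*} [Field K] (hn : 0 < n) (v : Fin (2 * n) → K) :
    Fin (2 * n) → K :=
  fun j => (v ⟨(2 * n - (j : ℕ)) % (2 * n), Nat.mod_lt _ (by omega)⟩)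
    ^ q ^ (2 * n - (2 * n - (j : ℕ)) % (2 * n))

/-- The `F_q`-linear map on `F_{q^{2n}}` induced by a coefficient vector. -/
def toFun (q n : ℕ) {K : Type*} [Field K] (v : Fin (2 * n) → K) : K → K :=
  fun x => ∑ i : Fin (2 * n), v i * x ^ q ^ (i : ℕ)

/-- Equivalence of rank-metric codes of `q`-linearized maps on `F_{q^{2n}}`:
`C₂ = { φ₁ ∘ f^ρ ∘ φ₂ : f ∈ C₁ }` for linearized permutations `φ₁, φ₂` and a field
automorphism `ρ` (acting on `f` coefficientwise, i.e. `f^ρ = ρ ∘ f ∘ ρ⁻¹`). -/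
def codeEquiv (q n : ℕ) {K : Type*} [Field K] (C₁ C₂ : Set (K → K)) : Prop :=
  ∃ (φ₁ φ₂ : K → K) (ρ : K ≃+* K),
    (∃ a : Fin (2 * n) → K, φ₁ = fun x => ∑ i : Fin (2 * n), a i * x ^ q ^ (i : ℕ)) ∧
    Function.Bijective φ₁ ∧
    (∃ a : Fin (2 * n) → K, φ₂ = fun x => ∑ i : Fin (2 * n), a i * x ^ q ^ (i : ℕ)) ∧
    Function.Bijective φ₂ ∧
    C₂ = {g | ∃ f ∈ C₁, g = φ₁ ∘ (⇑ρ ∘ f ∘ ⇑ρ.symm) ∘ φ₂}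

/-!
Write `f = Σⱼ vⱼ X^{q^j}` with exponents of `q` read modulo `2n` (as `x^{q^{2n}} = x`).
Then `f̂(x) = Σⱼ (vⱼ x)^{q^{-j}}`, so for `f = aX + Σ cᵢ X^{q^{si}} + γb X^{q^{sk}}`
the adjoint is `f̂ = aX + Σ cᵢ^{q^{-si}} X^{q^{-si}} + (γb)^{q^{-sk}} X^{q^{-sk}}`.
Composing with the linearized permutation `y ↦ γ⁻¹ y^{q^{sk}}` shifts every exponent by `sk`
and gives `bX + Σ γ⁻¹ c_{k-i}^{q^{si}} X^{q^{si}} + γ⁻¹ a^{q^{sk}} X^{q^{sk}}`, an element of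
`D_{k,s}(γ⁻¹)`; since Frobenius powers are bijective, every element of `D_{k,s}(γ⁻¹)` arises
in this way.
-/

open Finset

section FrobeniusPower

variable {K : Type*} [Field K] {q : ℕ}

lemma add_pow_of_card_eq_pow [Fintype K] {m : ℕ} (hK : Fintype.card K = q ^ m) (hm : m ≠ 0)
    (x y : K) : (x + y) ^ q = x ^ q + y ^ q := by
  have hp : Fact (ringChar K).Prime := ⟨CharP.char_is_prime K (ringChar K)⟩
  obtain ⟨d, -, hcard⟩ := FiniteField.card K (ringChar K)
  have hq : q ∣ ringChar K ^ (d : ℕ) := hcard ▸ hK ▸ dvd_pow_self q hm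
  obtain ⟨e, -, rfl⟩ := (Nat.dvd_prime_pow hp.out).mp hq
  exact add_pow_char_pow x y _ _

lemma add_pow_pow_of_add_pow (hadd : ∀ x y : K, (x + y) ^ q = x ^ q + y ^ q) (j : ℕ) (x y : K) :
    (x + y) ^ q ^ j = x ^ q ^ j + y ^ q ^ j := by
  induction j with
  | zero => simp
  | succ j ih => rw [pow_succ, pow_mul, pow_mul, pow_mul, ih, hadd]

def qPowHom (hadd : ∀ x y : K, (x + y) ^ q = x ^ q + y ^ q) (j : ℕ) : K →+* K :=
  RingHom.mk' (powMonoidHom (q ^ j)) (add_pow_pow_of_add_pow hadd j)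

@[simp]
lemma qPowHom_apply (hadd : ∀ x y : K, (x + y) ^ q = x ^ q + y ^ q) (j : ℕ) (x : K) :
    qPowHom hadd j x = x ^ q ^ j := rfl

lemma qPowHom_bijective [Finite K] (hadd : ∀ x y : K, (x + y) ^ q = x ^ q + y ^ q) (j : ℕ) :
    Function.Bijective (qPowHom hadd j) :=
  Finite.injective_iff_bijective.mp (qPowHom hadd j).injective

variable {m : ℕ}

lemma pow_q_pow_mul_eq_self (hcard : ∀ x : K, x ^ q ^ m = x) (x : K) (t : ℕ) :
    x ^ q ^ (m * t) = x := by
  induction t with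
  | zero => simp
  | succ t ih => rw [Nat.mul_succ, pow_add, pow_mul, ih, hcard]

lemma pow_q_pow_mod (hcard : ∀ x : K, x ^ q ^ m = x) (x : K) (u : ℕ) :
    x ^ q ^ (u % m) = x ^ q ^ u := by
  conv_rhs => rw [← Nat.div_add_mod u m, pow_add, pow_mul, pow_q_pow_mul_eq_self hcard]

lemma pow_q_pow_congr (hcard : ∀ x : K, x ^ q ^ m = x) {u w : ℕ} (h : (u : ZMod m) = w) (x : K) :
    x ^ q ^ u = x ^ q ^ w := by
  rw [← pow_q_pow_mod hcard x u, ← pow_q_pow_mod hcard x w,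
    (ZMod.natCast_eq_natCast_iff' u w m).mp h]

end FrobeniusPower

section CoefficientVectors

variable {K : Type*} [Field K]

lemma sum_apply_ite_eq {m : ℕ} (F : ℕ → K →+ K) {e : ℕ} (he : e < m) (t : K) :
    ∑ j : Fin m, F j (if (j : ℕ) = e then t else 0) = F e t := by
  rw [Fintype.sum_eq_single ⟨e, he⟩ fun j hj => by
    rw [if_neg (Fin.val_ne_iff.mpr hj), map_zero]]
  simp

/-- The coefficient vector of `a X + Σ_{0<i<k} c_i X^{q^{si}} + γ b X^{q^{sk}}`. -/
def dVec (s n k : ℕ) (γ a b : K) (c : ℕ → K) : Fin (2 * n) → K :=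
  fun j => (if (j : ℕ) = 0 then a else 0)
    + (∑ i ∈ Ioo 0 k, if (j : ℕ) = (s * i) % (2 * n) then c i else 0)
    + (if (j : ℕ) = (s * k) % (2 * n) then γ * b else 0)

lemma mem_DCoeff {q s n k : ℕ} {γ : K} {v : Fin (2 * n) → K} :
    v ∈ DCoeff q s n k γ ↔
      ∃ a b : K, a ^ q ^ n = a ∧ b ^ q ^ n = b ∧ ∃ c : ℕ → K, v = dVec s n k γ a b c :=
  Iff.rfl

lemma dVec_congr {s n k : ℕ} {γ a b : K} {c c' : ℕ → K} (h : ∀ i ∈ Ioo 0 k, c i = c' i) :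
    dVec s n k γ a b c = dVec s n k γ a b c' := by
  funext j
  simp only [dVec]
  congr 2
  exact sum_congr rfl fun i hi => by rw [h i hi]

lemma sum_apply_dVec {n : ℕ} (hn : 0 < n) (s k : ℕ) (F : ℕ → K →+ K) (γ a b : K)
    (c : ℕ → K) :
    ∑ j : Fin (2 * n), F j (dVec s n k γ a b c j) =
      F 0 a + ∑ i ∈ Ioo 0 k, F ((s * i) % (2 * n)) (c i) + F ((s * k) % (2 * n)) (γ * b) := by
  have h2n : 0 < 2 * n := by omega
  simp only [dVec, map_add, map_sum, sum_add_distrib]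
  rw [sum_comm]
  simp only [sum_apply_ite_eq F h2n, sum_apply_ite_eq F (Nat.mod_lt _ h2n)]

end CoefficientVectors

section LinearizedMaps

variable {K : Type*} [Field K] {q n : ℕ}

lemma toFun_ite_eq (hcard : ∀ x : K, x ^ q ^ (2 * n) = x) (hn : 0 < n) (e : ℕ) (t : K) :
    toFun q n (fun j => if (j : ℕ) = e % (2 * n) then t else 0) = fun x => t * x ^ q ^ e := by
  funext x
  simpa [toFun, pow_q_pow_mod hcard] using
    sum_apply_ite_eq (fun j => AddMonoidHom.mulRight (x ^ q ^ j))
      (Nat.mod_lt e (by omega : 0 < 2 * n)) t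

lemma toFun_dVec (hcard : ∀ x : K, x ^ q ^ (2 * n) = x) (hn : 0 < n) (s k : ℕ) (γ a b : K)
    (c : ℕ → K) (x : K) :
    toFun q n (dVec s n k γ a b c) x =
      a * x + ∑ i ∈ Ioo 0 k, c i * x ^ q ^ (s * i) + γ * b * x ^ q ^ (s * k) := by
  simpa [toFun, pow_q_pow_mod hcard] using
    sum_apply_dVec hn s k (fun j => AddMonoidHom.mulRight (x ^ q ^ j)) γ a b c

lemma adjCoeff_apply [NeZero (2 * n)] (hn : 0 < n) (v : Fin (2 * n) → K) (j : Fin (2 * n)) :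
    adjCoeff q n hn v j = v (-j) ^ q ^ (2 * n - ((-j : Fin (2 * n)) : ℕ)) := by
  simp only [adjCoeff, Fin.val_neg']
  rfl

lemma toFun_adjCoeff (hcard : ∀ x : K, x ^ q ^ (2 * n) = x) (hn : 0 < n)
    (v : Fin (2 * n) → K) (x : K) :
    toFun q n (adjCoeff q n hn v) x = ∑ j : Fin (2 * n), (v j * x) ^ q ^ (2 * n - (j : ℕ)) := by
  have : NeZero (2 * n) := ⟨by omega⟩
  rw [toFun, ← _root_.Equiv.sum_comp (Equiv.neg (Fin (2 * n)))]
  refine sum_congr rfl fun j _ => ?_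
  rw [Equiv.neg_apply, adjCoeff_apply, neg_neg, Fin.val_neg', pow_q_pow_mod hcard, mul_pow]

end LinearizedMaps

section Adjoint

variable {K : Type*} [Field K] {q n : ℕ}

lemma natCast_sub_mod_add {m : ℕ} (hm : 0 < m) (u w : ℕ) :
    ((m - u % m + w : ℕ) : ZMod m) = w - u := by
  rw [Nat.cast_add, Nat.cast_sub (Nat.mod_lt u hm).le, ZMod.natCast_self, ZMod.natCast_mod]
  ring

lemma comp_toFun_adjCoeff_dVec (hadd : ∀ x y : K, (x + y) ^ q = x ^ q + y ^ q)
    (hcard : ∀ x : K, x ^ q ^ (2 * n) = x) (hn : 0 < n) (s k : ℕ) {γ : K} (hγ : γ ≠ 0)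
    (a b : K) (c : ℕ → K) :
    (fun y => γ⁻¹ * y ^ q ^ (s * k)) ∘ toFun q n (adjCoeff q n hn (dVec s n k γ a b c)) =
      toFun q n
        (dVec s n k γ⁻¹ b (a ^ q ^ (s * k)) fun i => γ⁻¹ * c (k - i) ^ q ^ (s * i)) := by
  funext x
  have h2n : 0 < 2 * n := by omega
  have hsum := sum_apply_dVec hn s k
    (fun j => (qPowHom hadd (2 * n - j + s * k)).toAddMonoidHom.comp (AddMonoidHom.mulRight x))
    γ a b c
  simp only [AddMonoidHom.comp_apply, RingHom.toAddMonoidHom_eq_coe, AddMonoidHom.coe_coe,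
    AddMonoidHom.coe_mulRight, qPowHom_apply] at hsum
  rw [Function.comp_apply, toFun_adjCoeff hcard hn, toFun_dVec hcard hn, ← qPowHom_apply hadd,
    map_sum]
  simp only [qPowHom_apply, ← pow_mul, ← pow_add]
  have ha : (a * x) ^ q ^ (2 * n - 0 + s * k) = a ^ q ^ (s * k) * x ^ q ^ (s * k) := by
    rw [pow_q_pow_congr hcard (w := s * k) (by simp), mul_pow]
  have hc : ∑ i ∈ Ioo 0 k, (c i * x) ^ q ^ (2 * n - s * i % (2 * n) + s * k) =
      ∑ i ∈ Ioo 0 k, c (k - i) ^ q ^ (s * i) * x ^ q ^ (s * i) := by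
    refine sum_nbij' (k - ·) (k - ·) (by simp +contextual; omega) (by simp +contextual; omega)
      (by simp +contextual; omega) (by simp +contextual; omega) fun i hi => ?_
    have hik : i ≤ k := (mem_Ioo.mp hi).2.le
    rw [Nat.sub_sub_self hik, ← mul_pow]
    refine pow_q_pow_congr hcard ?_ _
    rw [natCast_sub_mod_add h2n]
    push_cast [Nat.cast_sub hik]
    ring
  have hb : (γ * b * x) ^ q ^ (2 * n - s * k % (2 * n) + s * k) = γ * b * x := by
    rw [pow_q_pow_congr hcard (w := 0) (by rw [natCast_sub_mod_add h2n]; simp), pow_zero, pow_one]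
  rw [hsum, ha, hc, hb, mul_add, mul_add, mul_sum]
  simp only [mul_assoc, inv_mul_cancel_left₀ hγ]
  ring

lemma image_comp_toFun_adjCoeff_DCoeff [Finite K] (hadd : ∀ x y : K, (x + y) ^ q = x ^ q + y ^ q)
    (hcard : ∀ x : K, x ^ q ^ (2 * n) = x) (hn : 0 < n) (s k : ℕ) {γ : K} (hγ : γ ≠ 0) :
    (fun v => (fun y => γ⁻¹ * y ^ q ^ (s * k)) ∘ toFun q n (adjCoeff q n hn v)) ''
        DCoeff q s n k γ = toFun q n '' DCoeff q s n k γ⁻¹ := by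
  ext g
  constructor
  · rintro ⟨v, hv, rfl⟩
    obtain ⟨a, b, ha, hb, c, rfl⟩ := mem_DCoeff.mp hv
    exact ⟨_, mem_DCoeff.mpr ⟨b, _, hb, by rw [pow_right_comm, ha], _, rfl⟩,
      (comp_toFun_adjCoeff_dVec hadd hcard hn s k hγ a b c).symm⟩
  · rintro ⟨v, hv, rfl⟩
    obtain ⟨a', b', ha', hb', c', rfl⟩ := mem_DCoeff.mp hv
    choose root hroot using fun j => (qPowHom_bijective hadd j).2
    simp only [qPowHom_apply] at hroot
    have ha : root (s * k) b' ^ q ^ n = root (s * k) b' :=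
      (qPowHom_bijective hadd (s * k)).1 <| by
        rw [qPowHom_apply, qPowHom_apply, pow_right_comm, hroot, hb']
    refine ⟨dVec s n k γ (root (s * k) b') a' fun j => root (s * (k - j)) (γ * c' (k - j)),
      mem_DCoeff.mpr ⟨_, a', ha, ha', _, rfl⟩, ?_⟩
    dsimp only
    rw [comp_toFun_adjCoeff_dVec hadd hcard hn s k hγ, hroot, dVec_congr fun i hi => ?_]
    rw [Nat.sub_sub_self (mem_Ioo.mp hi).2.le, hroot, inv_mul_cancel_left₀ hγ]

end Adjoint

theorem D_code_adjoint_general (q s n k : ℕ) (hn : 0 < n)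
    (K : Type*) [Field K] [Fintype K] (hK : Fintype.card K = q ^ (2 * n))
    (γ : K)
    (hγ : ¬ ∃ z : K, z ^ q = z ∧ z ^ 2 = γ ^ (∑ i ∈ Finset.range (2 * n), q ^ i)) :
    codeEquiv q n
      (toFun q n '' (adjCoeff q n hn '' DCoeff q s n k γ))
      (toFun q n '' DCoeff q s n k γ⁻¹) := by
  have hcard : ∀ x : K, x ^ q ^ (2 * n) = x := fun x => hK ▸ FiniteField.pow_card x
  have hadd := add_pow_of_card_eq_pow hK (by omega)
  have hq : q ≠ 0 := by
    rintro rfl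
    simp [hn.ne'] at hK
  have hγ0 : γ ≠ 0 := by
    rintro rfl
    have hsum : ∑ i ∈ range (2 * n), q ^ i ≠ 0 :=
      (sum_pos (fun i _ => by positivity) (nonempty_range_iff.mpr (by omega))).ne'
    exact hγ ⟨0, zero_pow hq, by rw [zero_pow two_ne_zero, zero_pow hsum]⟩
  refine ⟨fun y => γ⁻¹ * y ^ q ^ (s * k), id, RingEquiv.refl K,
    ⟨_, (toFun_ite_eq hcard hn (s * k) γ⁻¹).symm⟩,
    (mulLeft_bijective₀ _ (inv_ne_zero hγ0)).comp (qPowHom_bijective hadd (s * k)),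
    ⟨_, funext fun x => by
      simpa [toFun] using (congrFun (toFun_ite_eq hcard hn 0 (1 : K)) x).symm⟩,
    Function.bijective_id, ?_⟩
  rw [← image_comp_toFun_adjCoeff_DCoeff hadd hcard hn s k hγ0, Set.image_image]
  ext g
  simp [eq_comm]

/-- The adjoint code of `D_{k,s}(γ)` is equivalent to `D_{k,s}(1/γ)`. -/
theorem D_code_adjoint (q s n k : ℕ) (hn : 0 < n) (hs : Nat.Coprime s (2 * n))
    (hk1 : 1 ≤ k) (hk2 : k ≤ 2 * n - 1)
    (K : Type*) [Field K] [Fintype K] (hK : Fintype.card K = q ^ (2 * n))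
    (γ : K)
    (hγ : ¬ ∃ z : K, z ^ q = z ∧ z ^ 2 = γ ^ (∑ i ∈ Finset.range (2 * n), q ^ i)) :
    codeEquiv q n
      (toFun q n '' (adjCoeff q n hn '' DCoeff q s n k γ))
      (toFun q n '' DCoeff q s n k γ⁻¹) :=
  D_code_adjoint_general q s n k hn K hK γ hγ
end

section
/- For (x,y) ∈ F_{q^n}^2, the element x + yγ lies in the left nucleus of the Hughes–Kleinfeld semifield H if and only if x^{q^{2s}} + y^{q^{2s}} v^{q^s} = x + y^{q^s} v and y u + x^{q^s} v + y^{q^s} v^2 = y^{q^{2s}} u^{q^s} + x^{q^{2s}} v + y^{q^{2s}} v^{q^s+1}. -/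
/-- The Hughes–Kleinfeld multiplication on pairs:
`(c,d) * (a,b) = (ac + b d^{q^s} u, ad + b c^{q^s} + b d^{q^s} v)`. -/
def HKmul (q s : ℕ) {K : Type*} [Field K] (u v : K) (x y : K × K) : K × K :=
  (y.1 * x.1 + y.2 * x.2 ^ q ^ s * u,
   y.1 * x.2 + y.2 * x.1 ^ q ^ s + y.2 * x.2 ^ q ^ s * v)

/-!
Since `q` is a power of the characteristic, `a ↦ a ^ q ^ s` is a ring endomorphism of `K`, and a
direct expansion factors the associator `(x,y) * (w * z) - ((x,y) * w) * z` as `z.2 * w.2 ^ q ^ s`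
times the vector `(u * E₁, E₂)`, where `E₁`, `E₂` are the differences of the two sides of the two
equations. Taking `w = z = γ = (0,1)`, `(x,y)` lies in the left nucleus iff `u * E₁ = E₂ = 0`.
Finally `u ≠ 0`: otherwise `γ ^ q ^ s = v ∈ F_{q^n}`, so `γ ∈ F_{q^n}` and its norm
`γ ^ (1 + q + ⋯ + q ^ (2n-1)) = (γ ^ (1 + q + ⋯ + q ^ (n-1))) ^ 2` is a square of
an element of `F_q`.
-/

open Finset

theorem FiniteField.exists_ringHom_eq_pow_pow_of_card_eq_pow {K : Type*} [Field K] [Fintype K]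
    {q k : ℕ} (hK : Fintype.card K = q ^ k) (s : ℕ) :
    ∃ φ : K →+* K, ⇑φ = fun a => a ^ q ^ s := by
  obtain ⟨m, hp, hcard⟩ := FiniteField.card K (ringChar K)
  have : ExpChar K (ringChar K) := ExpChar.prime hp
  have hk : k ≠ 0 := by
    rintro rfl
    exact (Fintype.one_lt_card (α := K)).ne' (by rw [hK, pow_zero])
  obtain ⟨j, -, hj⟩ := (Nat.dvd_prime_pow hp).mp (hcard ▸ hK ▸ dvd_pow_self q hk)
  exact ⟨iterateFrobenius K (ringChar K) (j * s), by ext a; rw [iterateFrobenius_def, hj, pow_mul]⟩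

theorem exists_sq_eq_pow_geom_sum_two_mul_of_pow_pow_eq_self {K : Type*} [Field K] {q n : ℕ}
    (hq : q ≠ 0) (hn : n ≠ 0) {γ : K} (hγ : γ ^ q ^ n = γ) :
    ∃ z : K, z ^ q = z ∧ z ^ 2 = γ ^ ∑ i ∈ range (2 * n), q ^ i := by
  rcases eq_or_ne γ 0 with rfl | hγ0
  · refine ⟨0, zero_pow hq, ?_⟩
    rw [zero_pow two_ne_zero, zero_pow]
    exact (sum_pos (fun i _ => pow_pos (Nat.pos_of_ne_zero hq) i) (by simpa using hn)).ne'
  refine ⟨γ ^ ∑ i ∈ range n, q ^ i, mul_right_cancel₀ hγ0 ?_, ?_⟩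
  · -- with `S = ∑ i ∈ range n, q ^ i`: `q S + 1 = q ^ n + S`, both being
    -- `∑ i ∈ range (n + 1), q ^ i`
    rw [← pow_mul, ← pow_succ, mul_comm, ← geom_sum_succ, geom_sum_succ', pow_add, hγ, mul_comm]
  · rw [two_mul, sum_range_add, pow_add]
    simp only [pow_add, ← mul_sum, pow_mul, hγ, sq]

section HughesKleinfeld

variable {K : Type*} [Field K] {q s : ℕ}

theorem HKmul_sub_HKmul_eq_smul (hσ : ∀ a b : K, (a + b) ^ q ^ s = a ^ q ^ s + b ^ q ^ s)
    (u v x y : K) (w z : K × K) :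
    HKmul q s u v (x, y) (HKmul q s u v w z) - HKmul q s u v (HKmul q s u v (x, y) w) z =
      (z.2 * w.2 ^ q ^ s) •
        (u * (x + y ^ q ^ s * v - (x ^ q ^ (2 * s) + y ^ q ^ (2 * s) * v ^ q ^ s)),
          y * u + x ^ q ^ s * v + y ^ q ^ s * v ^ 2 - (y ^ q ^ (2 * s) * u ^ q ^ s
            + x ^ q ^ (2 * s) * v + y ^ q ^ (2 * s) * v ^ (q ^ s + 1))) := by
  have hσσ (a : K) : (a ^ q ^ s) ^ q ^ s = a ^ q ^ (2 * s) := by rw [← pow_mul, ← pow_add, two_mul]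
  simp only [HKmul, hσ, mul_pow, hσσ, Prod.mk_sub_mk, Prod.smul_mk, smul_eq_mul, Prod.mk.injEq]
  constructor <;> ring

theorem pow_pow_eq_self_of_pow_succ_eq_mul {n : ℕ}
    (hinj : Function.Injective fun a : K => a ^ q ^ s) (hqn : q ^ n ≠ 0) {γ v : K}
    (hv : v ^ q ^ n = v) (hγ : γ ^ (q ^ s + 1) = v * γ) :
    γ ^ q ^ n = γ := by
  rcases eq_or_ne γ 0 with rfl | hγ0
  · exact zero_pow hqn
  have hγv : γ ^ q ^ s = v := mul_right_cancel₀ hγ0 (by rw [← pow_succ, hγ])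
  apply hinj
  simp only [← pow_mul, mul_comm (q ^ n)]
  rw [pow_mul, hγv, hv]

end HughesKleinfeld

theorem HK_left_nucleus_general (q s n : ℕ)
    (K : Type*) [Field K] [Fintype K] (hK : Fintype.card K = q ^ (2 * n))
    (γ u v : K) (hv : v ^ q ^ n = v)
    (hγ : ¬ ∃ z : K, z ^ q = z ∧ z ^ 2 = γ ^ (∑ i ∈ Finset.range (2 * n), q ^ i))
    (hγuv : γ ^ (q ^ s + 1) = u + v * γ)
    (x y : K) :
    (∀ w z : K × K, w.1 ^ q ^ n = w.1 → w.2 ^ q ^ n = w.2 →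
        z.1 ^ q ^ n = z.1 → z.2 ^ q ^ n = z.2 →
        HKmul q s u v (x, y) (HKmul q s u v w z)
          = HKmul q s u v (HKmul q s u v (x, y) w) z)
      ↔ (x ^ q ^ (2 * s) + y ^ q ^ (2 * s) * v ^ q ^ s = x + y ^ q ^ s * v ∧
         y * u + x ^ q ^ s * v + y ^ q ^ s * v ^ 2
           = y ^ q ^ (2 * s) * u ^ q ^ s + x ^ q ^ (2 * s) * v
             + y ^ q ^ (2 * s) * v ^ (q ^ s + 1)) := by
  obtain ⟨φ, hφ⟩ := FiniteField.exists_ringHom_eq_pow_pow_of_card_eq_pow hK s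
  have hcard : 1 < q ^ (2 * n) := hK ▸ Fintype.one_lt_card
  have hq : q ≠ 0 := by rintro rfl; exact (zero_pow_le_one _).not_gt hcard
  have hn : n ≠ 0 := by rintro rfl; simp at hcard
  have hu : u ≠ 0 := by
    rintro rfl
    rw [zero_add] at hγuv
    exact hγ <| exists_sq_eq_pow_geom_sum_two_mul_of_pow_pow_eq_self hq hn <|
      pow_pow_eq_self_of_pow_succ_eq_mul (hφ ▸ φ.injective) (pow_ne_zero n hq) hv hγuv
  have hσ (a b : K) : (a + b) ^ q ^ s = a ^ q ^ s + b ^ q ^ s := by simpa [hφ] using map_add φ a b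
  simp_rw [← sub_eq_zero (a := HKmul q s u v (x, y) _), HKmul_sub_HKmul_eq_smul hσ]
  constructor
  · intro h
    simpa [hq, hu, Prod.ext_iff, sub_eq_zero, eq_comm (a := x + _)] using h (0, 1) (0, 1)
  · rintro ⟨h1, h2⟩ w z - - - -
    simp [h1, h2]

/-- The element `x + yγ` (identified with `(x,y)`) lies in the left nucleus of the
Hughes–Kleinfeld semifield `H` if and only if
`x^{q^{2s}} + y^{q^{2s}} v^{q^s} = x + y^{q^s} v` and
`yu + x^{q^s}v + y^{q^s}v² = y^{q^{2s}}u^{q^s} + x^{q^{2s}}v + y^{q^{2s}}v^{q^s+1}`. -/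
theorem HK_left_nucleus (q s n : ℕ) (hn : 0 < n) (hs : Nat.Coprime s (2 * n))
    (K : Type*) [Field K] [Fintype K] (hK : Fintype.card K = q ^ (2 * n))
    (γ u v : K) (hu : u ^ q ^ n = u) (hv : v ^ q ^ n = v)
    (hγ : ¬ ∃ z : K, z ^ q = z ∧ z ^ 2 = γ ^ (∑ i ∈ Finset.range (2 * n), q ^ i))
    (hγuv : γ ^ (q ^ s + 1) = u + v * γ)
    (x y : K) (hx : x ^ q ^ n = x) (hy : y ^ q ^ n = y) :
    (∀ w z : K × K, w.1 ^ q ^ n = w.1 → w.2 ^ q ^ n = w.2 →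
        z.1 ^ q ^ n = z.1 → z.2 ^ q ^ n = z.2 →
        HKmul q s u v (x, y) (HKmul q s u v w z)
          = HKmul q s u v (HKmul q s u v (x, y) w) z)
      ↔ (x ^ q ^ (2 * s) + y ^ q ^ (2 * s) * v ^ q ^ s = x + y ^ q ^ s * v ∧
         y * u + x ^ q ^ s * v + y ^ q ^ s * v ^ 2
           = y ^ q ^ (2 * s) * u ^ q ^ s + x ^ q ^ (2 * s) * v
             + y ^ q ^ (2 * s) * v ^ (q ^ s + 1)) :=
  HK_left_nucleus_general q s n K hK γ u v hv hγ hγuv x y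
end

section
/- If φ = Σ_{i=0}^{2n−1} a_i X^{q^i} is a linearized polynomial over F_{q^{2n}} satisfying φ ∘ (bX) = (b'X) ∘ φ for some map b ↦ b', where b ranges over F_{q^n}, then at most two coefficients of φ, namely a_l and a_{l+n} for some single index l, are nonzero. -/
/-- Number-theoretic helper: if `q ≥ 2`, `d < 2n`, and `q^n - 1 ∣ q^d - 1`,
then `d = 0` or `d = n`. -/
lemma pow_sub_one_dvd_aux (q n d : ℕ) (hq : 2 ≤ q) (hn : 0 < n) (hd : d < 2 * n)
    (hdvd : q ^ n - 1 ∣ q ^ d - 1) : d = 0 ∨ d = n := by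
  rcases Nat.eq_zero_or_pos d with h0 | hdpos
  · exact Or.inl h0
  have hq1 : 1 < q := hq
  have key : ∀ e : ℕ, 0 < e → e < n → ¬ (q ^ n - 1 ∣ q ^ e - 1) := by
    intro e he hen hdv
    have h1 : 0 < q ^ e - 1 := by
      have : 2 ≤ q ^ e := le_trans hq (Nat.le_self_pow he.ne' q)
      omega
    have h2 : q ^ e - 1 < q ^ n - 1 := by
      have := Nat.pow_lt_pow_right hq1 hen
      have : q ^ e < q ^ n := Nat.pow_lt_pow_right hq1 hen
      omega
    have := Nat.le_of_dvd h1 hdv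
    omega
  -- d ≥ n, since otherwise contradiction
  have hdn : n ≤ d := by
    by_contra h
    exact key d hdpos (by omega) hdvd
  rcases Nat.eq_or_lt_of_le hdn with h | h
  · exact Or.inr h.symm
  · -- n < d < 2n: derive q^n - 1 ∣ q^(d-n) - 1, contradiction
    exfalso
    have hdn' : 0 < d - n := by omega
    have hdnn : d - n < n := by omega
    have hsplit : q ^ (d - n) * q ^ n = q ^ d := by
      rw [← pow_add]; congr 1; omega
    have hdvd2 : q ^ n - 1 ∣ q ^ d - q ^ (d - n) := by
      have : q ^ d - q ^ (d - n) = q ^ (d - n) * (q ^ n - 1) := by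
        rw [Nat.mul_sub, hsplit, mul_one]
      rw [this]
      exact dvd_mul_left _ _
    have h1 : 1 ≤ q ^ (d - n) := Nat.one_le_pow _ _ (by omega)
    have h2 : q ^ (d - n) ≤ q ^ d := Nat.pow_le_pow_right (by omega) (by omega)
    have hdvd3 : q ^ n - 1 ∣ q ^ (d - n) - 1 := by
      have := Nat.dvd_sub hdvd hdvd2
      have heq : (q ^ d - 1) - (q ^ d - q ^ (d - n)) = q ^ (d - n) - 1 := by omega
      rwa [heq] at this
    exact key (d - n) hdn' hdnn hdvd3

/-- Structural lemma: if a linearized polynomial `φ = Σᵢ aᵢ X^{q^i}` over `F_{q^{2n}}`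
satisfies `φ ∘ (bX) = (b'X) ∘ φ` (coefficientwise, i.e. `aᵢ b^{q^i} = b' aᵢ` for all
`i`) for every `b ∈ F_{q^n}` (with `b'` depending on `b`), then at most two
coefficients `a_l` and `a_{l+n}` of `φ` are nonzero, for a single index `l`. -/
theorem normalizer_of_subfield_scalars (q n : ℕ) (hn : 0 < n)
    (K : Type*) [Field K] [Fintype K] (hK : Fintype.card K = q ^ (2 * n))
    (a : Fin (2 * n) → K)
    (hnorm : ∀ b : K, b ^ q ^ n = b → ∃ b' : K,
      ∀ i : Fin (2 * n), a i * b ^ q ^ (i : ℕ) = b' * a i) :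
    ∃ l : ℕ, ∀ i : Fin (2 * n), a i ≠ 0 →
      (i : ℕ) = l ∨ (i : ℕ) = (l + n) % (2 * n) := by
  classical
  -- q ≥ 2
  have hq : 2 ≤ q := by
    by_contra h
    have hcard : 2 ≤ Fintype.card K := Fintype.one_lt_card
    interval_cases q <;> simp_all <;> omega
  -- get a unit of order q^n - 1
  obtain ⟨g, hg⟩ := IsCyclic.exists_ofOrder_eq_natCard (α := Kˣ)
  have hcardu : Nat.card Kˣ = q ^ (2 * n) - 1 := by
    rw [Nat.card_eq_fintype_card, Fintype.card_units, hK]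
  have hdvd : q ^ n - 1 ∣ q ^ (2 * n) - 1 := by
    have : q ^ (2 * n) = (q ^ n) ^ 2 := by rw [← pow_mul]; ring_nf
    rw [this]
    simpa using Nat.sub_dvd_pow_sub_pow (q ^ n) 1 2
  have hg0 : orderOf g ≠ 0 := by
    rw [hg, hcardu]
    have : 2 ≤ q ^ (2 * n) := le_trans hq (Nat.le_self_pow (by omega) q)
    omega
  set u : Kˣ := g ^ (orderOf g / (q ^ n - 1)) with hu
  have hou : orderOf u = q ^ n - 1 := by
    apply orderOf_pow_orderOf_div hg0
    rw [hg, hcardu]; exact hdvd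
  have hqn1 : 1 ≤ q ^ n := Nat.one_le_pow _ _ (by omega)
  have hqn2 : 2 ≤ q ^ n := le_trans hq (Nat.le_self_pow hn.ne' q)
  -- u^(q^n) = u, hence the corresponding field element b satisfies b^(q^n) = b
  have hufix : (u : K) ^ q ^ n = (u : K) := by
    have : u ^ (q ^ n) = u := by
      have h1 : u ^ (q ^ n - 1) = 1 := by rw [← hou]; exact pow_orderOf_eq_one u
      calc u ^ (q ^ n) = u ^ (q ^ n - 1) * u := by
            rw [← pow_succ]; congr 1; omega
        _ = u := by rw [h1, one_mul]
    calc (u : K) ^ q ^ n = ((u ^ q ^ n : Kˣ) : K) := by push_cast; ring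
      _ = (u : K) := by rw [this]
  obtain ⟨b', hb'⟩ := hnorm (u : K) hufix
  -- any two nonzero coefficient indices differ by 0 or n
  have hkey : ∀ i j : Fin (2 * n), a i ≠ 0 → a j ≠ 0 → (i : ℕ) ≤ (j : ℕ) →
      (j : ℕ) = (i : ℕ) ∨ (j : ℕ) = (i : ℕ) + n := by
    intro i j hi hj hij
    have hbi : (u : K) ^ q ^ (i : ℕ) = b' := by
      have h := hb' i
      rw [mul_comm (a i)] at h
      exact mul_right_cancel₀ hi h
    have hbj : (u : K) ^ q ^ (j : ℕ) = b' := by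
      have h := hb' j
      rw [mul_comm (a j)] at h
      exact mul_right_cancel₀ hj h
    have heqK : (u : K) ^ q ^ (i : ℕ) = (u : K) ^ q ^ (j : ℕ) := by rw [hbi, hbj]
    have hequ : u ^ q ^ (i : ℕ) = u ^ q ^ (j : ℕ) := by
      apply Units.ext
      push_cast
      exact heqK
    have hmod : q ^ (i : ℕ) ≡ q ^ (j : ℕ) [MOD q ^ n - 1] := by
      rw [← hou]; exact pow_eq_pow_iff_modEq.mp hequ
    have hdvd1 : q ^ n - 1 ∣ q ^ (j : ℕ) - q ^ (i : ℕ) :=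
      (Nat.modEq_iff_dvd' (Nat.pow_le_pow_right (by omega) hij)).mp hmod
    -- factor out q^i
    set d := (j : ℕ) - (i : ℕ) with hd
    have hfac : q ^ (j : ℕ) - q ^ (i : ℕ) = q ^ (i : ℕ) * (q ^ d - 1) := by
      rw [Nat.mul_sub, mul_one, ← pow_add]
      congr 2; omega
    have hcop : (q ^ n - 1).Coprime (q ^ (i : ℕ)) := by
      have h1 : (q ^ n - 1).Coprime (q ^ n) := by
        have : q ^ n = (q ^ n - 1) + 1 := by omega
        rw [this]
        simp
      exact (Nat.Coprime.coprime_dvd_right (dvd_pow_self q hn.ne') h1).pow_right _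
    have hdvd2 : q ^ n - 1 ∣ q ^ d - 1 := by
      rw [hfac] at hdvd1
      exact (Nat.Coprime.dvd_of_dvd_mul_left hcop hdvd1)
    have hdlt : d < 2 * n := by
      have := j.isLt; omega
    rcases pow_sub_one_dvd_aux q n d hq hn hdlt hdvd2 with h | h
    · left; omega
    · right; omega
  -- wrap up: pick minimal nonzero index
  by_cases hex : ∃ i : Fin (2 * n), a i ≠ 0
  · obtain ⟨i0, hi0⟩ := hex
    classical
    set S : Finset (Fin (2 * n)) := Finset.univ.filter (fun i => a i ≠ 0) with hS
    have hSne : S.Nonempty := ⟨i0, by simp [hS, hi0]⟩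
    set m := S.min' hSne with hm
    have hmS : a m ≠ 0 := by
      have := S.min'_mem hSne
      simp [hS] at this
      exact this
    refine ⟨(m : ℕ), fun i hi => ?_⟩
    have hle : m ≤ i := S.min'_le i (by simp [hS, hi])
    rcases hkey m i hmS hi hle with h | h
    · exact Or.inl h
    · right
      rw [h, Nat.mod_eq_of_lt]
      have := i.isLt
      omega
  · exact ⟨0, fun i hi => absurd hi (by push_neg at hex; simp [hex i])⟩
end

section
/- Let n = 2, gcd(s,4)=1, and let η ∈ F_{q^4}^* with N_{q^4/q}(η) ≠ 1. If c, d ∈ F_{q^4} satisfy η c^{q^2} = d and η d^{q^2} = c with (c,d) ≠ (0,0), then η^{q^2+1} = 1 and hence N_{q^4/q}(η) = (η·η^{q^2})^{1+q} = 1, a contradiction; therefore no such nonzero pair (c,d) exists. -/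
/-! If `(c, d) ≠ (0, 0)` then `c ≠ 0`, and composing the two relations gives
`c = η^(1 + q^2) c^(q^4) = η^(1 + q^2) c`, so `η^(q^2 + 1) = 1`. The norm exponent factors as
`1 + q + q^2 + q^3 = (q^2 + 1)(q + 1)`, hence `N(η) = 1`. -/

theorem pow_succ_eq_one_of_mul_pow_swap {M : Type*} [CommMonoidWithZero M]
    [IsRightCancelMulZero M]
    {η c d : M} {r : ℕ} (hc : c ≠ 0) (hcr : c ^ (r * r) = c)
    (h1 : η * c ^ r = d) (h2 : η * d ^ r = c) : η ^ (r + 1) = 1 := by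
  refine mul_right_cancel₀ hc ?_
  calc η ^ (r + 1) * c
      _ = η * (η * c ^ r) ^ r := by rw [mul_pow, ← pow_mul, hcr, pow_succ', mul_assoc]
      _ = 1 * c := by rw [h1, h2, one_mul]

theorem no_nonzero_pair_general (q : ℕ)
    (K : Type*) [Field K] [Fintype K] (hK : Fintype.card K = q ^ 4)
    (η : K) (hηN : η ^ (1 + q + q ^ 2 + q ^ 3) ≠ 1)
    (c d : K) (h1 : η * c ^ q ^ 2 = d) (h2 : η * d ^ q ^ 2 = c)
    (hcd : ¬(c = 0 ∧ d = 0)) : False := by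
  have hq : q ≠ 0 := by
    rintro rfl
    simp at hK
  have hc : c ≠ 0 := by
    rintro rfl
    exact hcd ⟨rfl, by rw [← h1, zero_pow (pow_ne_zero 2 hq), mul_zero]⟩
  have hcq : c ^ (q ^ 2 * q ^ 2) = c := by
    rw [← pow_add, ← hK, FiniteField.pow_card]
  have hη : η ^ (q ^ 2 + 1) = 1 := pow_succ_eq_one_of_mul_pow_swap hc hcq h1 h2
  apply hηN
  rw [show 1 + q + q ^ 2 + q ^ 3 = (q ^ 2 + 1) * (q + 1) by ring, pow_mul, hη, one_pow]

/-- Key computation for `n = 2`: if `η ∈ F_{q^4}*` with `N_{q^4/q}(η) ≠ 1`, there is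
no pair `(c,d) ≠ (0,0)` in `F_{q^4}` with `η c^{q^2} = d` and `η d^{q^2} = c`
(otherwise `η^{q^2+1} = 1`, whence `N_{q^4/q}(η) = (η·η^{q^2})^{1+q} = 1`). -/
theorem no_nonzero_pair (q s : ℕ) (hs : Nat.Coprime s 4)
    (K : Type*) [Field K] [Fintype K] (hK : Fintype.card K = q ^ 4)
    (η : K) (hη0 : η ≠ 0) (hηN : η ^ (1 + q + q ^ 2 + q ^ 3) ≠ 1)
    (c d : K) (h1 : η * c ^ q ^ 2 = d) (h2 : η * d ^ q ^ 2 = c)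
    (hcd : ¬(c = 0 ∧ d = 0)) : False :=
  no_nonzero_pair_general q K hK η hηN c d h1 h2 hcd
end

section
/- Let gcd(s,m)=1, 1 ≤ k ≤ m−1, and η ∈ F_{q^m} with N_{q^m/q}(η) ≠ (−1)^{km}. Then the twisted Gabidulin code H_{k,s}(η,h) = { a_0 x + a_1 x^{q^s} + ... + a_{k−1} x^{q^{s(k−1)}} + η a_0^{q^h} x^{q^{sk}} : a_0,...,a_{k−1} ∈ F_{q^m} } is an MRD code: it has q^{km} elements and every nonzero element has at most q^{k−1} roots in F_{q^m}. -/
/-!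
For `L(x) = ∑_{i ≤ d} c_i x^{q^{si}}` and a root `u ≠ 0` of `L`, summation by parts gives
`L(u x) = Q(x^{q^s} - x)` with `Q` of `q^s`-degree `d - 1`, `Q_0 = -c_0 u` and
`Q_{d-1} = c_d u^{q^{sd}}`. As `x ↦ x^{q^s} - x` is additive and its kernel is `𝔽_q` (the
fixed points of `x ↦ x^{q^s}`, since `gcd(s,m) = 1`), `L` has at most `q` times as many roots
as `Q`. By induction a nonzero `L` has at most `q^d` roots, and if it has more than `q^{d-1}`
roots then `N(c_0) = (-1)^{dm} N(c_d)`, because the norm is multiplicative and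
Frobenius-invariant. For an element of `H_{k,s}(η,h)` with nonzero top coefficient
`η a₀^{q^h}` this would force `N(η) = (-1)^{km}`. Since `k < m`, the root bound also shows that
the coefficients are determined by the function, which gives `q^{km}` codewords.
-/

open Finset Function

theorem AddMonoidHom.card_filter_le_card_ker_mul {G H : Type*} [AddGroup G] [Fintype G]
    [DecidableEq G] [AddGroup H] [Fintype H] [DecidableEq H] (ψ : G →+ H) (P : H → Prop)
    [DecidablePred P] : #{x | P (ψ x)} ≤ #{x | ψ x = 0} * #{y | P y} := by
  refine (card_le_mul_card_image (f := ψ) _ _ fun b hb => ?_).trans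
    (Nat.mul_le_mul_left _ (card_le_card fun y hy => ?_))
  · obtain ⟨a, -, rfl⟩ := mem_image.1 hb
    refine card_le_card_of_injOn (· - a) (fun x hx => ?_) (fun x _ y _ h => sub_left_inj.1 h)
    simp_all [map_sub]
  · obtain ⟨x, hx, rfl⟩ := mem_image.1 hy
    simpa using hx

section FiniteField

variable {K : Type*} [Field K] {q m : ℕ}

/-- `N_{q^m/q}(x) = x ^ ((q^m - 1)/(q - 1))`, with the exponent written as a geometric sum. -/
def relNorm (q m : ℕ) (x : K) : K := x ^ ∑ i ∈ range m, q ^ i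

theorem relNorm_mul (x y : K) : relNorm q m (x * y) = relNorm q m x * relNorm q m y :=
  mul_pow x y _

variable [Fintype K]

theorem one_lt_and_ne_zero_of_card_eq_pow (hK : Fintype.card K = q ^ m) : 1 < q ∧ m ≠ 0 := by
  have h : 1 < q ^ m := hK ▸ Fintype.one_lt_card
  have hm : m ≠ 0 := by rintro rfl; simp at h
  exact ⟨(Nat.one_lt_pow_iff hm).1 h, hm⟩

theorem add_pow_pow_of_card_eq (hK : Fintype.card K = q ^ m) (t : ℕ) (x y : K) :
    (x + y) ^ q ^ t = x ^ q ^ t + y ^ q ^ t := by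
  obtain ⟨p, _⟩ := CharP.exists K
  have hp := CharP.char_is_prime K p
  have := Fact.mk hp
  obtain ⟨n, -, hn⟩ := FiniteField.card K p
  obtain ⟨e, -, rfl⟩ : ∃ e ≤ (n : ℕ), q = p ^ e := (Nat.dvd_prime_pow hp).1 <| by
    rw [← hn, hK]
    exact dvd_pow_self q (one_lt_and_ne_zero_of_card_eq_pow hK).2
  rw [← pow_mul, add_pow_char_pow]

theorem sub_pow_pow_of_card_eq (hK : Fintype.card K = q ^ m) (t : ℕ) (x y : K) :
    (x - y) ^ q ^ t = x ^ q ^ t - y ^ q ^ t := by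
  rw [eq_sub_iff_add_eq, ← add_pow_pow_of_card_eq hK, sub_add_cancel]

theorem neg_one_pow_pow_of_card_eq (hK : Fintype.card K = q ^ m) (t : ℕ) :
    (-1 : K) ^ q ^ t = -1 := by
  have hq := (one_lt_and_ne_zero_of_card_eq_pow hK).1
  simpa [zero_pow (pow_ne_zero t (by omega : q ≠ 0))] using sub_pow_pow_of_card_eq hK t (0 : K) 1

theorem card_filter_pow_pow_eq_self_le [DecidableEq K] {s : ℕ} (hK : Fintype.card K = q ^ m)
    (hs : s.Coprime m) : #{x : K | x ^ q ^ s = x} ≤ q := by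
  have hq := (one_lt_and_ne_zero_of_card_eq_pow hK).1
  refine (Polynomial.card_le_degree_of_subset_roots fun x hx => ?_).trans_eq
    (FiniteField.X_pow_card_sub_X_natDegree_eq K hq)
  have hper : IsPeriodicPt (· ^ q) (s.gcd m) x := by
    refine IsPeriodicPt.gcd ?_ ?_ <;> simp only [IsPeriodicPt, IsFixedPt, pow_iterate]
    · exact (mem_filter.1 hx).2
    · rw [← hK, FiniteField.pow_card]
  rw [hs.gcd_eq_one, IsPeriodicPt, IsFixedPt, iterate_one] at hper
  simp [FiniteField.X_pow_card_sub_X_ne_zero K hq, hper]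

theorem relNorm_neg_one (hK : Fintype.card K = q ^ m) : relNorm q m (-1 : K) = (-1) ^ m := by
  simp [relNorm, ← prod_pow_eq_pow_sum, neg_one_pow_pow_of_card_eq hK]

theorem relNorm_pow (hK : Fintype.card K = q ^ m) (x : K) : relNorm q m x ^ q = relNorm q m x := by
  have hE : (∑ i ∈ range m, q ^ i) * q + 1 = ∑ i ∈ range m, q ^ i + q ^ m := by
    rw [mul_comm, ← geom_sum_succ, geom_sum_succ', add_comm]
  obtain rfl | hx := eq_or_ne x 0
  · have hm := (one_lt_and_ne_zero_of_card_eq_pow hK).2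
    have hq := (one_lt_and_ne_zero_of_card_eq_pow hK).1
    simp [relNorm, zero_pow (geom_sum_pos (Nat.zero_le q) hm).ne', zero_pow (by omega : q ≠ 0)]
  refine mul_right_cancel₀ hx ?_
  rw [relNorm, ← pow_mul, ← pow_succ, hE, pow_add, ← hK, FiniteField.pow_card]

theorem relNorm_pow_pow (hK : Fintype.card K = q ^ m) (t : ℕ) (x : K) :
    relNorm q m (x ^ q ^ t) = relNorm q m x := by
  rw [relNorm, ← pow_mul, mul_comm, pow_mul, ← relNorm, ← congrFun (pow_iterate q t)]
  exact iterate_fixed (relNorm_pow hK x) t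

end FiniteField

section Linearized

variable {K : Type*} [Field K] {q s m : ℕ}

def linearized (q s d : ℕ) (c : ℕ → K) (x : K) : K :=
  ∑ i ∈ range (d + 1), c i * x ^ q ^ (s * i)

/-- The coefficients of `Q` with `L(u x) = Q(x ^ q ^ s - x)` for a root `u` of `L`, found by
summation by parts. -/
def quotientCoeff (q s : ℕ) (c : ℕ → K) (u : K) (j : ℕ) : K :=
  -∑ i ∈ range (j + 1), c i * u ^ q ^ (s * i)

theorem quotientCoeff_zero (c : ℕ → K) (u : K) : quotientCoeff q s c u 0 = -(c 0 * u) := by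
  simp [quotientCoeff]

theorem quotientCoeff_of_linearized_eq_zero {d : ℕ} {c : ℕ → K} {u : K}
    (hu : linearized q s (d + 1) c u = 0) :
    quotientCoeff q s c u d = c (d + 1) * u ^ q ^ (s * (d + 1)) := by
  rw [linearized, sum_range_succ] at hu
  rw [quotientCoeff]
  linear_combination -hu

theorem linearized_mul_eq [Fintype K] (hK : Fintype.card K = q ^ m) {d : ℕ} {c : ℕ → K}
    {u : K} (hu : linearized q s (d + 1) c u = 0) (x : K) :
    linearized q s (d + 1) c (u * x) =
      linearized q s d (quotientCoeff q s c u) (x ^ q ^ s - x) := by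
  have hsmul : ∀ i, c i * (u * x) ^ q ^ (s * i) = x ^ q ^ (s * i) • (c i * u ^ q ^ (s * i)) :=
    fun i => by rw [mul_pow, smul_eq_mul]; ring
  have hdiff : ∀ i, (x ^ q ^ s - x) ^ q ^ (s * i) = x ^ q ^ (s * (i + 1)) - x ^ q ^ (s * i) :=
    fun i => by rw [sub_pow_pow_of_card_eq hK, ← pow_mul, ← pow_add, mul_add_one, add_comm]
  rw [linearized, sum_congr rfl fun i _ => hsmul i, sum_range_by_parts, ← linearized, hu]
  simp only [linearized, quotientCoeff, hdiff, smul_eq_mul, add_tsub_cancel_right]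
  rw [mul_zero, zero_sub, ← sum_neg_distrib]
  exact sum_congr rfl fun i _ => by ring

theorem exists_quotientCoeff_ne_zero {d : ℕ} {c : ℕ → K} {u : K} (hu : u ≠ 0)
    (hroot : linearized q s (d + 1) c u = 0) (hc : ∃ i ≤ d + 1, c i ≠ 0) :
    ∃ j ≤ d, quotientCoeff q s c u j ≠ 0 := by
  by_contra! hQ
  obtain ⟨i, hi, hci⟩ := hc
  have hpartial : ∀ n ≤ d + 2, ∑ j ∈ range n, c j * u ^ q ^ (s * j) = 0 := by
    rintro (_ | n) hn
    · simp
    · obtain hn | rfl := Nat.lt_or_eq_of_le (Nat.le_of_succ_le_succ hn)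
      · exact neg_eq_zero.1 (hQ n (by omega))
      · exact hroot
  have := hpartial (i + 1) (by omega)
  rw [sum_range_succ, hpartial i (by omega), zero_add] at this
  exact hci ((mul_eq_zero.1 this).resolve_right (pow_ne_zero _ hu))

end Linearized

section RootCount

variable {K : Type*} [Field K] [Fintype K] [DecidableEq K] {q s m : ℕ}

theorem card_roots_linearized_le_mul (hK : Fintype.card K = q ^ m) (hs : s.Coprime m) {d : ℕ}
    {c : ℕ → K} {u : K} (hu : u ≠ 0) (hroot : linearized q s (d + 1) c u = 0) :
    #{x | linearized q s (d + 1) c x = 0} ≤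
      q * #{x | linearized q s d (quotientCoeff q s c u) x = 0} := by
  let ψ : K →+ K := AddMonoidHom.mk' (fun x => x ^ q ^ s - x) fun x y => by
    rw [add_pow_pow_of_card_eq hK]; ring
  have hscale : #{x | linearized q s (d + 1) c x = 0} =
      #{x | linearized q s (d + 1) c (u * x) = 0} :=
    card_nbij' (u⁻¹ * ·) (u * ·) (fun x hx => by simpa [mul_inv_cancel_left₀ hu] using hx)
      (fun x hx => by simpa using hx) (fun x _ => mul_inv_cancel_left₀ hu x)
      (fun x _ => inv_mul_cancel_left₀ hu x)
  have hker : #{x | ψ x = 0} ≤ q := by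
    simpa [ψ, sub_eq_zero] using card_filter_pow_pow_eq_self_le hK hs
  rw [hscale]
  simp only [linearized_mul_eq hK hroot]
  exact (ψ.card_filter_le_card_ker_mul (linearized q s d (quotientCoeff q s c u) · = 0)).trans
    (Nat.mul_le_mul_right _ hker)

theorem card_roots_linearized_le (hK : Fintype.card K = q ^ m) (hs : s.Coprime m) (d : ℕ)
    (c : ℕ → K) (hc : ∃ i ≤ d, c i ≠ 0) : #{x | linearized q s d c x = 0} ≤ q ^ d := by
  induction d generalizing c with
  | zero =>
    obtain ⟨i, hi, hci⟩ := hc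
    obtain rfl : i = 0 := by omega
    refine card_le_one.2 fun x hx y hy => ?_
    simp_all [linearized]
  | succ d ih =>
    by_cases hroot : ∃ u ≠ 0, linearized q s (d + 1) c u = 0
    · obtain ⟨u, hu, hroot⟩ := hroot
      calc #{x | linearized q s (d + 1) c x = 0}
          ≤ q * #{x | linearized q s d (quotientCoeff q s c u) x = 0} :=
            card_roots_linearized_le_mul hK hs hu hroot
        _ ≤ q * q ^ d := Nat.mul_le_mul_left q (ih _ (exists_quotientCoeff_ne_zero hu hroot hc))
        _ = q ^ (d + 1) := (pow_succ' q d).symm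
    · push Not at hroot
      have hq := (one_lt_and_ne_zero_of_card_eq_pow hK).1
      refine (card_le_one.2 fun x hx y hy => ?_).trans (Nat.one_le_pow _ _ (by omega))
      rw [mem_filter] at hx hy
      rw [not_imp_not.1 (hroot x) hx.2, not_imp_not.1 (hroot y) hy.2]

theorem relNorm_eq_of_card_roots_linearized_gt (hK : Fintype.card K = q ^ m) (hs : s.Coprime m)
    (d : ℕ) (c : ℕ → K) (hd : c d ≠ 0)
    (hcard : q ^ d < q * #{x | linearized q s d c x = 0}) :
    relNorm q m (c 0) = (-1) ^ (d * m) * relNorm q m (c d) := by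
  induction d generalizing c with
  | zero => simp
  | succ d ih =>
    have hq := (one_lt_and_ne_zero_of_card_eq_pow hK).1
    obtain ⟨u, hu, hroot⟩ : ∃ u ≠ 0, linearized q s (d + 1) c u = 0 := by
      have h2 : 1 < #{x | linearized q s (d + 1) c x = 0} := by
        by_contra! h
        have := Nat.mul_le_mul_left q h
        have : q ≤ q ^ (d + 1) := Nat.le_self_pow (by omega) q
        omega
      obtain ⟨u, hu, hu0⟩ := (one_lt_card_iff_nontrivial.1 h2).exists_ne 0
      exact ⟨u, hu0, (mem_filter.1 hu).2⟩
    set Q := quotientCoeff q s c u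
    have hQd : Q d = c (d + 1) * u ^ q ^ (s * (d + 1)) := quotientCoeff_of_linearized_eq_zero hroot
    have hQcard : q ^ d < q * #{x | linearized q s d Q x = 0} := by
      have := (Nat.mul_le_mul_left q (card_roots_linearized_le_mul hK hs hu hroot)).trans_lt' hcard
      rw [pow_succ'] at this
      exact Nat.lt_of_mul_lt_mul_left this
    have hQ0 : Q 0 = -(c 0 * u) := quotientCoeff_zero c u
    have key := ih Q (hQd ▸ mul_ne_zero hd (pow_ne_zero _ hu)) hQcard
    rw [hQd, hQ0, neg_eq_neg_one_mul, relNorm_mul, relNorm_mul, relNorm_mul,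
      relNorm_pow_pow hK, relNorm_neg_one hK] at key
    refine mul_right_cancel₀ (b := relNorm q m u) (pow_ne_zero _ hu) ?_
    have hsq : ((-1 : K) ^ m) ^ 2 = 1 := by rw [← pow_mul, mul_comm, pow_mul]; simp
    linear_combination (-1 : K) ^ m * key - relNorm q m (c 0) * relNorm q m u * hsq

end RootCount

section TwistedGabidulin

variable {K : Type*} [Field K] {q s m k : ℕ}

theorem linearized_sub (d : ℕ) (c c' : ℕ → K) (x : K) :
    linearized q s d (c - c') x = linearized q s d c x - linearized q s d c' x := by
  simp only [linearized, Pi.sub_apply, sub_mul, sum_sub_distrib]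

theorem exists_coeff_ne_zero_of_linearized_ne_zero {d : ℕ} {c : ℕ → K}
    (h : linearized q s d c ≠ 0) : ∃ i ≤ d, c i ≠ 0 := by
  by_contra! hc
  exact h (funext fun x => sum_eq_zero fun i hi => by
    rw [hc i (Nat.lt_succ_iff.1 (mem_range.1 hi)), zero_mul])

theorem coeff_eq_zero_of_linearized_eq_zero [Fintype K] [DecidableEq K]
    (hK : Fintype.card K = q ^ m) (hs : s.Coprime m) {d : ℕ} (hd : d < m) {c : ℕ → K}
    (h : linearized q s d c = 0) : ∀ i ≤ d, c i = 0 := by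
  by_contra! hc
  have hroots := card_roots_linearized_le hK hs d c hc
  simp only [h, Pi.zero_apply, filter_true, card_univ, hK] at hroots
  exact hroots.not_gt (Nat.pow_lt_pow_right (one_lt_and_ne_zero_of_card_eq_pow hK).1 hd)

def twistedCoeff (q h : ℕ) (hk : 0 < k) (η : K) (a : Fin k → K) (i : ℕ) : K :=
  if hi : i < k then a ⟨i, hi⟩ else if i = k then η * a ⟨0, hk⟩ ^ q ^ h else 0

theorem linearized_twistedCoeff (h : ℕ) (hk : 0 < k) (η : K) (a : Fin k → K) :
    linearized q s k (twistedCoeff q h hk η a) =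
      fun x => (∑ i, a i * x ^ q ^ (s * (i : ℕ)))
        + η * a ⟨0, hk⟩ ^ q ^ h * x ^ q ^ (s * k) := by
  funext x
  rw [linearized, sum_range_succ,
    ← Fin.sum_univ_eq_sum_range (fun i => twistedCoeff q h hk η a i * x ^ q ^ (s * i))]
  simp [twistedCoeff]

theorem linearized_twistedCoeff_injective [Fintype K] [DecidableEq K]
    (hK : Fintype.card K = q ^ m) (hs : s.Coprime m) (h : ℕ) (hk : 0 < k) (hkm : k < m) (η : K) :
    Injective fun a : Fin k → K => linearized q s k (twistedCoeff q h hk η a) := by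
  intro a a' haa'
  have hdiff : linearized q s k (twistedCoeff q h hk η a - twistedCoeff q h hk η a') = 0 :=
    funext fun x => by rw [linearized_sub]; exact sub_eq_zero.2 (congrFun haa' x)
  funext i
  simpa [twistedCoeff, sub_eq_zero] using
    coeff_eq_zero_of_linearized_eq_zero hK hs hkm hdiff i i.isLt.le

theorem card_roots_linearized_twistedCoeff_le [Fintype K] [DecidableEq K]
    (hK : Fintype.card K = q ^ m) (hs : s.Coprime m) (h : ℕ) (hk : 0 < k) {η : K}
    (hη : relNorm q m η ≠ (-1) ^ (k * m)) {a : Fin k → K}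
    (hf : linearized q s k (twistedCoeff q h hk η a) ≠ 0) :
    #{x | linearized q s k (twistedCoeff q h hk η a) x = 0} ≤ q ^ (k - 1) := by
  have hq := (one_lt_and_ne_zero_of_card_eq_pow hK).1
  set c := twistedCoeff q h hk η a
  have hc0 : c 0 = a ⟨0, hk⟩ := by simp [c, twistedCoeff, hk]
  have hck : c k = η * a ⟨0, hk⟩ ^ q ^ h := by simp [c, twistedCoeff]
  obtain ⟨d, rfl⟩ : ∃ d, k = d + 1 := ⟨k - 1, by omega⟩
  rw [Nat.add_sub_cancel]
  by_cases htop : c (d + 1) = 0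
  · have hlow : linearized q s (d + 1) c = linearized q s d c :=
      funext fun x => by rw [linearized, sum_range_succ, htop, zero_mul, add_zero, linearized]
    obtain ⟨i, hi, hci⟩ := exists_coeff_ne_zero_of_linearized_ne_zero hf
    have hid : i ≤ d := by
      refine Nat.le_of_lt_succ (lt_of_le_of_ne hi ?_)
      rintro rfl
      exact hci htop
    rw [hlow]
    exact card_roots_linearized_le hK hs d c ⟨i, hid, hci⟩
  by_contra! hlt
  have hnorm := relNorm_eq_of_card_roots_linearized_gt hK hs (d + 1) c htop
    (by rw [pow_succ']; exact Nat.mul_lt_mul_of_pos_left hlt (by omega))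
  have ha0 : a ⟨0, hk⟩ ≠ 0 := fun ha0 => htop (by
    rw [hck, ha0, zero_pow (pow_ne_zero h (by omega)), mul_zero])
  rw [hc0, hck, relNorm_mul, relNorm_pow_pow hK] at hnorm
  refine hη (mul_right_cancel₀ (b := relNorm q m (a ⟨0, hk⟩)) (pow_ne_zero _ ha0) ?_)
  have hsq : ((-1 : K) ^ ((d + 1) * m)) ^ 2 = 1 := by
    rw [← pow_mul, mul_comm, pow_mul]; simp
  linear_combination
    -(-1 : K) ^ ((d + 1) * m) * hnorm - relNorm q m η * relNorm q m (a ⟨0, hk⟩) * hsq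

end TwistedGabidulin

theorem twisted_gabidulin_is_MRD_general (q s m k h : ℕ)
    (hs : Nat.Coprime s m) (hk1 : 1 ≤ k) (hk2 : k ≤ m - 1)
    (K : Type*) [Field K] [Fintype K] (hK : Fintype.card K = q ^ m)
    (η : K) (hη : η ^ (∑ i ∈ Finset.range m, q ^ i) ≠ (-1) ^ (k * m)) :
    Set.ncard {f : K → K | ∃ a : Fin k → K,
        f = fun x => (∑ i, a i * x ^ q ^ (s * (i : ℕ)))
          + η * (a ⟨0, hk1⟩) ^ q ^ h * x ^ q ^ (s * k)} = q ^ (k * m) ∧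
    ∀ f ∈ {f : K → K | ∃ a : Fin k → K,
        f = fun x => (∑ i, a i * x ^ q ^ (s * (i : ℕ)))
          + η * (a ⟨0, hk1⟩) ^ q ^ h * x ^ q ^ (s * k)},
      f ≠ 0 → Set.ncard {x : K | f x = 0} ≤ q ^ (k - 1) := by
  classical
  have hkm : k < m := by have := (one_lt_and_ne_zero_of_card_eq_pow hK).2; omega
  have hcode : {f : K → K | ∃ a : Fin k → K,
      f = fun x => (∑ i, a i * x ^ q ^ (s * (i : ℕ)))
        + η * (a ⟨0, hk1⟩) ^ q ^ h * x ^ q ^ (s * k)} =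
      Set.range fun a => linearized q s k (twistedCoeff q h hk1 η a) := by
    simp only [linearized_twistedCoeff, Set.range, eq_comm]
  rw [hcode]
  refine ⟨?_, ?_⟩
  · rw [Set.ncard_range_of_injective (linearized_twistedCoeff_injective hK hs h hk1 hkm η),
      Nat.card_eq_fintype_card, Fintype.card_fun, Fintype.card_fin, hK, ← pow_mul, mul_comm]
  · rintro _ ⟨a, rfl⟩ hf
    rw [Set.ncard_eq_toFinset_card', Set.toFinset_ofPred]
    exact card_roots_linearized_twistedCoeff_le hK hs h hk1 hη hf

/-- Sheekey's twisted Gabidulin code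
`H_{k,s}(η,h) = { a₀x + a₁x^{q^s} + ⋯ + a_{k-1}x^{q^{s(k-1)}} + η a₀^{q^h} x^{q^{sk}} }`
over `F_{q^m}`, with `gcd(s,m) = 1`, `1 ≤ k ≤ m-1` and `N_{q^m/q}(η) ≠ (-1)^{km}`,
is an MRD code: it has `q^{km}` elements and every nonzero element has at most
`q^{k-1}` roots in `F_{q^m}`. -/
theorem twisted_gabidulin_is_MRD (q s m k h : ℕ) (hm : 2 ≤ m)
    (hs : Nat.Coprime s m) (hk1 : 1 ≤ k) (hk2 : k ≤ m - 1)
    (K : Type*) [Field K] [Fintype K] (hK : Fintype.card K = q ^ m)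
    (η : K) (hη : η ^ (∑ i ∈ Finset.range m, q ^ i) ≠ (-1) ^ (k * m)) :
    Set.ncard {f : K → K | ∃ a : Fin k → K,
        f = fun x => (∑ i, a i * x ^ q ^ (s * (i : ℕ)))
          + η * (a ⟨0, hk1⟩) ^ q ^ h * x ^ q ^ (s * k)} = q ^ (k * m) ∧
    ∀ f ∈ {f : K → K | ∃ a : Fin k → K,
        f = fun x => (∑ i, a i * x ^ q ^ (s * (i : ℕ)))
          + η * (a ⟨0, hk1⟩) ^ q ^ h * x ^ q ^ (s * k)},
      f ≠ 0 → Set.ncard {x : K | f x = 0} ≤ q ^ (k - 1) :=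
  twisted_gabidulin_is_MRD_general q s m k h hs hk1 hk2 K hK η hη
end
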